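/- arXiv:1308.3022 — 5 statements merged into one kernel-verified Lean document; each statement's English description precedes it below -/
import Mathlib

section
/- Let g be a hyperbolic element of a group G acting on S^1 (g has exactly two fixed points a, b, one attracting and one repelling), and let Λ be a G-invariant lamination. If Λ has a leaf one of whose endpoints is a fixed point of g, then Λ contains the leaf (a, b) joining the two fixed points of g. -/
open Set Metric Filter Topology Function
noncomputable section

/-- The circle, modeled as `ℝ/ℤ`. -/
abbrev C1 := AddCircle (1:ℝ)

/-- The embedding of the circle into `ℂ` as the unit circle. -/
def toC (x : C1) : ℂ := (AddCircle.toCircle x : ℂ)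

/-- Two unordered pairs `{a,b}`, `{c,d}` of points of the circle are linked if `c` and `d`
lie in different connected components of the complement of `{a,b}`. -/
def Linked (a b c d : C1) : Prop :=
  c ∈ ({a,b}ᶜ : Set C1) ∧ d ∈ ({a,b}ᶜ : Set C1) ∧
    connectedComponentIn ({a,b}ᶜ : Set C1) c ≠ connectedComponentIn ({a,b}ᶜ : Set C1) d

/-- A lamination on the circle: a closed (in the open Möbius band, i.e. among pairs of
distinct points) symmetric set of pairwise unlinked pairs of distinct points. -/
structure IsLamination (Λ : Set (C1 × C1)) : Prop where
  ne : ∀ p ∈ Λ, p.1 ≠ p.2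
  symm : ∀ p ∈ Λ, (p.2, p.1) ∈ Λ
  isClosed : ∀ p ∈ closure Λ, p.1 ≠ p.2 → p ∈ Λ
  unlinked : ∀ p ∈ Λ, ∀ q ∈ Λ, ¬ Linked p.1 p.2 q.1 q.2

/-- The set of endpoints of leaves of a lamination. -/
def Ends (Λ : Set (C1 × C1)) : Set C1 := {x | ∃ y, (x, y) ∈ Λ}

/-- The union of the chords (in the unit disk of `ℂ`) realizing the leaves. -/
def chords (Λ : Set (C1 × C1)) : Set ℂ := ⋃ p ∈ Λ, segment ℝ (toC p.1) (toC p.2)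

/-- A gap of a lamination: the closure of a connected component of the complement of the
union of the chords in the open unit disk. -/
def IsGap (Λ : Set (C1 × C1)) (P : Set ℂ) : Prop :=
  ∃ x ∈ ball (0:ℂ) 1 \ chords Λ,
    P = closure (connectedComponentIn (ball (0:ℂ) 1 \ chords Λ) x)

/-- A lamination is very-full if every gap is a finite-sided ideal polygon, i.e. the convex
hull of at least three points of the circle. -/
def VeryFull (Λ : Set (C1 × C1)) : Prop :=
  IsLamination Λ ∧ ∀ P, IsGap Λ P →
    ∃ F : Finset C1, 3 ≤ F.card ∧ P = convexHull ℝ (toC '' (F : Set C1))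

/-- An orientation-preserving circle homeomorphism: one admitting a monotone lift. -/
def OrientationPreserving (f : C1 ≃ₜ C1) : Prop :=
  ∃ F : ℝ → ℝ, Monotone F ∧ ∀ x : ℝ, f (x : C1) = ((F x : ℝ) : C1)

/-- A subgroup of the homeomorphism group of the circle, as a set of homeomorphisms. -/
def IsHomeoGroup (G : Set (C1 ≃ₜ C1)) : Prop :=
  Homeomorph.refl C1 ∈ G ∧ (∀ g ∈ G, g.symm ∈ G) ∧ ∀ g ∈ G, ∀ h ∈ G, g.trans h ∈ G

/-- A lamination is invariant under a set of homeomorphisms. -/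
def Invariant (G : Set (C1 ≃ₜ C1)) (Λ : Set (C1 × C1)) : Prop :=
  ∀ g ∈ G, ∀ p ∈ Λ, (g p.1, g p.2) ∈ Λ

/-- Invariance under a single homeomorphism. -/
def InvariantUnder (g : C1 ≃ₜ C1) (Λ : Set (C1 × C1)) : Prop :=
  ∀ p ∈ Λ, (g p.1, g p.2) ∈ Λ

/-- A parabolic homeomorphism: exactly one fixed point. -/
def IsParabolic (g : C1 ≃ₜ C1) : Prop := ∃ x, fixedPoints ⇑g = {x}

/-- The cusp points of a group of circle homeomorphisms: fixed points of parabolics. -/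
def CuspPoints (G : Set (C1 ≃ₜ C1)) : Set C1 :=
  {x | ∃ g ∈ G, fixedPoints ⇑g = {x}}

/-- A rainbow at `p` for a lamination: a sequence of leaves each separating `p` from the
rest of the circle, with the arcs they cut off shrinking down to `p`. -/
def Rainbow (Λ : Set (C1 × C1)) (p : C1) : Prop :=
  ∃ l : ℕ → C1 × C1, (∀ i, l i ∈ Λ) ∧ (∀ i, (l i).1 ≠ p ∧ (l i).2 ≠ p) ∧
    Tendsto (fun i => (l i).1) atTop (nhds p) ∧
    Tendsto (fun i => (l i).2) atTop (nhds p) ∧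
    ∀ U ∈ nhds p, ∀ᶠ i in atTop,
      connectedComponentIn ({(l i).1, (l i).2}ᶜ : Set C1) p ⊆ U

/-- A pants-like collection of three very-full invariant laminations: pairwise transverse,
and endpoint sets pairwise meeting exactly in the cusp points of the group. -/
def PantsLike3 (G : Set (C1 ≃ₜ C1)) (Λ₁ Λ₂ Λ₃ : Set (C1 × C1)) : Prop :=
  VeryFull Λ₁ ∧ VeryFull Λ₂ ∧ VeryFull Λ₃ ∧
  Invariant G Λ₁ ∧ Invariant G Λ₂ ∧ Invariant G Λ₃ ∧
  Λ₁ ∩ Λ₂ = ∅ ∧ Λ₁ ∩ Λ₃ = ∅ ∧ Λ₂ ∩ Λ₃ = ∅ ∧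
  Ends Λ₁ ∩ Ends Λ₂ = CuspPoints G ∧ Ends Λ₁ ∩ Ends Λ₃ = CuspPoints G ∧
  Ends Λ₂ ∩ Ends Λ₃ = CuspPoints G

/-- A pants-like collection of two very-full invariant laminations. -/
def PantsLike2 (G : Set (C1 ≃ₜ C1)) (Λ₁ Λ₂ : Set (C1 × C1)) : Prop :=
  VeryFull Λ₁ ∧ VeryFull Λ₂ ∧ Invariant G Λ₁ ∧ Invariant G Λ₂ ∧
  Λ₁ ∩ Λ₂ = ∅ ∧ Ends Λ₁ ∩ Ends Λ₂ = CuspPoints G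

/-- An attracting fixed point: some neighborhood is attracted to it under forward iteration. -/
def AttractingFixedPt (g : C1 ≃ₜ C1) (x : C1) : Prop :=
  g x = x ∧ ∃ U ∈ nhds x, ∀ y ∈ U, Tendsto (fun n => (⇑g)^[n] y) atTop (nhds x)

/-- A repelling fixed point: attracting for the inverse. -/
def RepellingFixedPt (g : C1 ≃ₜ C1) (x : C1) : Prop :=
  g x = x ∧ ∃ U ∈ nhds x, ∀ y ∈ U, Tendsto (fun n => (⇑g.symm)^[n] y) atTop (nhds x)

theorem stmt_6 (G : Set (C1 ≃ₜ C1)) (hG : IsHomeoGroup G)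
    (hGo : ∀ g ∈ G, OrientationPreserving g) (g : C1 ≃ₜ C1) (hg : g ∈ G) (a b : C1)
    (hab : a ≠ b) (hfix : fixedPoints ⇑g = {a, b})
    (hatt : ∀ x, x ≠ b → Tendsto (fun n => (⇑g)^[n] x) atTop (nhds a))
    (hrep : ∀ x, x ≠ a → Tendsto (fun n => (⇑g.symm)^[n] x) atTop (nhds b))
    (Λ : Set (C1 × C1)) (hΛ : IsLamination Λ) (hinv : Invariant G Λ)
    (hleaf : ∃ p ∈ Λ, p.1 = a ∨ p.1 = b) : (a, b) ∈ Λ := by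
  obtain ⟨p, hp, hcase⟩ := hleaf
  obtain ⟨x, y⟩ := p
  simp only at hcase
  have hga : g a = a := by
    have : a ∈ fixedPoints ⇑g := by rw [hfix]; exact Or.inl rfl
    exact this
  have hgb : g b = b := by
    have : b ∈ fixedPoints ⇑g := by rw [hfix]; exact Or.inr rfl
    exact this
  have hsa : g.symm a = a := by
    have := congrArg g.symm hga; simpa using this.symm
  have hsb : g.symm b = b := by
    have := congrArg g.symm hgb; simpa using this.symm
  have hsG : g.symm ∈ G := hG.2.1 g hg
  -- iteration lemmas
  have iterg : ∀ n, ((⇑g)^[n] x, (⇑g)^[n] y) ∈ Λ := by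
    intro n; induction n with
    | zero => simpa using hp
    | succ n ih =>
      rw [Function.iterate_succ_apply', Function.iterate_succ_apply']
      exact hinv g hg _ ih
  have iters : ∀ n, ((⇑g.symm)^[n] x, (⇑g.symm)^[n] y) ∈ Λ := by
    intro n; induction n with
    | zero => simpa using hp
    | succ n ih =>
      rw [Function.iterate_succ_apply', Function.iterate_succ_apply']
      exact hinv g.symm hsG _ ih
  have itergfa : ∀ n, (⇑g)^[n] a = a := fun n => Function.iterate_fixed hga n
  have itergfb : ∀ n, (⇑g)^[n] b = b := fun n => Function.iterate_fixed hgb n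
  have itersfa : ∀ n, (⇑g.symm)^[n] a = a := fun n => Function.iterate_fixed hsa n
  have itersfb : ∀ n, (⇑g.symm)^[n] b = b := fun n => Function.iterate_fixed hsb n
  rcases hcase with hxa | hxb
  · -- x = a, y ≠ a; push y to b by g⁻¹
    subst hxa
    have hya : y ≠ x := (hΛ.ne _ hp).symm
    -- here x is a
    have hclo : (x, b) ∈ closure Λ := by
      refine mem_closure_of_tendsto (b := atTop) (f := fun n : ℕ => ((⇑g.symm)^[n] x, (⇑g.symm)^[n] y)) ?_ ?_
      · refine Tendsto.prodMk_nhds ?_ (hrep y hya)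
        simp only [itersfa]
        exact tendsto_const_nhds
      · filter_upwards with n using iters n
    exact hΛ.isClosed _ hclo hab
  · -- x = b, y ≠ b; push y to a by g
    subst hxb
    have hyb : y ≠ x := (hΛ.ne _ hp).symm
    have hclo : (x, a) ∈ closure Λ := by
      refine mem_closure_of_tendsto (b := atTop) (f := fun n : ℕ => ((⇑g)^[n] x, (⇑g)^[n] y)) ?_ ?_
      · refine Tendsto.prodMk_nhds ?_ (hatt y hyb)
        simp only [itergfb]
        exact tendsto_const_nhds
      · filter_upwards with n using iterg n
    have : (x, a) ∈ Λ := hΛ.isClosed _ hclo hab.symm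
    exact hΛ.symm _ this
end
end

section
/- Let g be a hyperbolic element of a group G ⊆ Homeo⁺(S^1) with fixed points a and b, and let Λ be a G-invariant very-full lamination. If Λ does not contain the leaf (a,b), then Λ contains a leaf l that separates a and b, i.e., the two endpoints of l lie in different connected components of S^1 \ {a, b}. -/
open Set Metric Filter Topology Function
noncomputable section

/-!
Iterating `g⁻¹` on a leaf `(a, y)` drives `y` to `b`, and iterating `g` on a leaf `(b, y)` drives
`y` to `a`; as `Λ` is closed and `(a, b) ∉ Λ`, neither `a` nor `b` is an endpoint of a leaf.
If no leaf linked `a` and `b`, every leaf would have both endpoints on one side of the chord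
`[a, b]`, so the open chord would lie in a single complementary region of the leaves. The closure
of that region is an ideal polygon with vertex `a`, whose edges at `a` lie on leaves: then `a`
would be an endpoint after all.
-/

namespace Lamination

section sign

variable {X : Type*} [TopologicalSpace X] {s : Set X} {f : X → ℝ} {x y : X}

lemma mul_pos_of_isPreconnected (hs : IsPreconnected s) (hf : ContinuousOn f s)
    (h0 : ∀ z ∈ s, f z ≠ 0) (hx : x ∈ s) (hy : y ∈ s) : 0 < f x * f y := by
  have himg := hs.image f hf
  have h0' : (0 : ℝ) ∉ f '' s := fun ⟨z, hz, hz0⟩ => h0 z hz hz0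
  rcases (h0 x hx).lt_or_gt with hfx | hfx <;> rcases (h0 y hy).lt_or_gt with hfy | hfy
  · exact mul_pos_of_neg_of_neg hfx hfy
  · exact absurd (himg.Icc_subset (mem_image_of_mem f hx) (mem_image_of_mem f hy)
      ⟨hfx.le, hfy.le⟩) h0'
  · exact absurd (himg.Icc_subset (mem_image_of_mem f hy) (mem_image_of_mem f hx)
      ⟨hfy.le, hfx.le⟩) h0'
  · exact mul_pos hfx hfy

lemma mul_nonneg_of_mem_closure (hs : IsPreconnected s) (hf : Continuous f)
    (h0 : ∀ z ∈ s, f z ≠ 0) (hx : x ∈ s) (hy : y ∈ closure s) : 0 ≤ f y * f x :=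
  closure_minimal (fun _ hz => (mul_pos_of_isPreconnected hs hf.continuousOn h0 hz hx).le)
    (isClosed_le continuous_const (hf.mul continuous_const)) hy

end sign

lemma mem_connectedComponentIn_of_mem_closure {X : Type*} [TopologicalSpace X]
    [LocallyConnectedSpace X] {S : Set X} (hS : IsOpen S) {x y : X} (hx : x ∈ S)
    (hxy : x ∈ closure (connectedComponentIn S y)) : x ∈ connectedComponentIn S y := by
  obtain ⟨z, hzx, hzy⟩ := mem_closure_iff_nhds.mp hxy _
    (hS.connectedComponentIn.mem_nhds (mem_connectedComponentIn hx))
  rw [connectedComponentIn_eq hzy, ← connectedComponentIn_eq hzx]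
  exact mem_connectedComponentIn hx

/-- `side P Q z` is positive, zero or negative according as `z` lies to the left of, on, or to
the right of the line from `P` to `Q`. -/
def side (P Q z : ℂ) : ℝ := (Q - P).re * (z - P).im - (Q - P).im * (z - P).re

section side

variable {P Q z : ℂ}

@[simp] lemma side_left : side P Q P = 0 := by simp [side]

@[simp] lemma side_right : side P Q Q = 0 := by unfold side; ring

lemma continuous_side : Continuous (side P Q) := by unfold side; fun_prop

lemma side_combo {s t : ℝ} (h : s + t = 1) (z w : ℂ) :
    side P Q (s • z + t • w) = s * side P Q z + t * side P Q w := by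
  obtain rfl := eq_sub_of_add_eq' h
  simp only [side, Complex.add_re, Complex.add_im, Complex.smul_re, Complex.smul_im,
    Complex.sub_re, Complex.sub_im, smul_eq_mul]
  ring

lemma side_eq_zero_of_mem_segment (hz : z ∈ segment ℝ P Q) : side P Q z = 0 := by
  obtain ⟨s, t, -, -, hst, rfl⟩ := hz
  rw [side_combo hst]; simp

lemma side_ne_zero_of_mem_segment {X Y : ℂ} (h : 0 < side P Q X * side P Q Y)
    (hz : z ∈ segment ℝ X Y) : side P Q z ≠ 0 := by
  obtain ⟨s, t, hs, ht, hst, rfl⟩ := hz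
  rw [side_combo hst]
  intro h0
  nlinarith [mul_nonneg hs (sq_nonneg (side P Q X)), mul_nonneg ht (sq_nonneg (side P Q Y)),
    congrArg (· * side P Q X) h0, congrArg (· * side P Q Y) h0]

lemma exists_eq_add_smul_of_side_eq_zero (hPQ : P ≠ Q) (h : side P Q z = 0) :
    ∃ t : ℝ, z = P + t • (Q - P) := by
  suffices ∀ d w : ℂ, d ≠ 0 → d.re * w.im - d.im * w.re = 0 → ∃ t : ℝ, w = t • d by
    obtain ⟨t, ht⟩ := this (Q - P) (z - P) (sub_ne_zero.mpr hPQ.symm) h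
    exact ⟨t, eq_add_of_sub_eq' ht⟩
  intro d w hd h
  have hd' : d.re ^ 2 + d.im ^ 2 ≠ 0 := by
    simpa [Complex.normSq_apply, sq] using (Complex.normSq_pos.mpr hd).ne'
  refine ⟨(d.re * w.re + d.im * w.im) / (d.re ^ 2 + d.im ^ 2), Complex.ext ?_ ?_⟩ <;>
    simp only [Complex.smul_re, Complex.smul_im, smul_eq_mul] <;> field_simp
  · linear_combination (-d.im) * h
  · linear_combination d.re * h

lemma openSegment_subset_ball (hP : P ∈ sphere (0 : ℂ) 1) (hQ : Q ∈ sphere (0 : ℂ) 1)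
    (hPQ : P ≠ Q) : openSegment ℝ P Q ⊆ ball 0 1 := by
  rw [← interior_closedBall (0 : ℂ) one_ne_zero]
  exact (strictConvex_closedBall ℝ (0 : ℂ) 1).openSegment_subset
    (sphere_subset_closedBall hP) (sphere_subset_closedBall hQ) hPQ

lemma normSq_add_smul_sub (hP : Complex.normSq P = 1) (hQ : Complex.normSq Q = 1) (t : ℝ) :
    Complex.normSq (P + t • (Q - P)) = 1 - t * (1 - t) * Complex.normSq (Q - P) := by
  simp only [Complex.normSq_apply, Complex.add_re, Complex.add_im, Complex.smul_re,
    Complex.smul_im, Complex.sub_re, Complex.sub_im, smul_eq_mul] at *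
  linear_combination (1 - t) * hP + t * hQ

lemma normSq_eq_one_of_mem_sphere (hz : z ∈ sphere (0 : ℂ) 1) : Complex.normSq z = 1 := by
  rw [Complex.normSq_eq_norm_sq, mem_sphere_zero_iff_norm.mp hz, one_pow]

lemma mem_segment_of_side_eq_zero (hP : P ∈ sphere (0 : ℂ) 1) (hQ : Q ∈ sphere (0 : ℂ) 1)
    (hPQ : P ≠ Q) (hz : z ∈ closedBall (0 : ℂ) 1) (h : side P Q z = 0) :
    z ∈ segment ℝ P Q := by
  obtain ⟨t, rfl⟩ := exists_eq_add_smul_of_side_eq_zero hPQ h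
  have hd : 0 < Complex.normSq (Q - P) := Complex.normSq_pos.mpr (sub_ne_zero.mpr hPQ.symm)
  have hz' : Complex.normSq (P + t • (Q - P)) ≤ 1 := by
    rw [Complex.normSq_eq_norm_sq]
    exact pow_le_one₀ (norm_nonneg _) (mem_closedBall_zero_iff.mp hz)
  rw [normSq_add_smul_sub (normSq_eq_one_of_mem_sphere hP) (normSq_eq_one_of_mem_sphere hQ)]
    at hz'
  have ht : 0 ≤ t * (1 - t) := nonneg_of_mul_nonneg_left (by linarith) hd
  rw [segment_eq_image']
  exact ⟨t, ⟨by nlinarith, by nlinarith⟩, rfl⟩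

lemma eq_or_eq_of_side_eq_zero (hP : P ∈ sphere (0 : ℂ) 1) (hQ : Q ∈ sphere (0 : ℂ) 1)
    (hPQ : P ≠ Q) (hz : z ∈ sphere (0 : ℂ) 1) (h : side P Q z = 0) : z = P ∨ z = Q := by
  have := mem_segment_of_side_eq_zero hP hQ hPQ (sphere_subset_closedBall hz) h
  rw [← insert_endpoints_openSegment] at this
  rcases this with h | h | h
  · exact .inl h
  · exact .inr h
  · have := openSegment_subset_ball hP hQ hPQ h
    rw [mem_ball_zero_iff] at this
    rw [mem_sphere_zero_iff_norm] at hz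
    linarith

lemma side_pos_of_isOpen {U : Set ℂ} (hU : IsOpen U)
    (hUP : U ⊆ {w | 0 ≤ side P Q w}) (hPQ : P ≠ Q) (hz : z ∈ U) : 0 < side P Q z := by
  have hpath : Tendsto (fun t : ℝ => z - t • (Complex.I * (Q - P))) (𝓝[>] 0) (𝓝 z) := by
    have : Continuous (fun t : ℝ => z - t • (Complex.I * (Q - P))) := by fun_prop
    exact (this.tendsto' 0 z (by simp)).mono_left nhdsWithin_le_nhds
  obtain ⟨t, htU, ht⟩ := ((hpath.eventually (hU.mem_nhds hz)).and self_mem_nhdsWithin).exists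
  have hd : 0 < Complex.normSq (Q - P) := Complex.normSq_pos.mpr (sub_ne_zero.mpr hPQ.symm)
  have hside : side P Q (z - t • (Complex.I * (Q - P)))
      = side P Q z - t * Complex.normSq (Q - P) := by
    simp only [side, Complex.sub_re, Complex.sub_im, Complex.smul_re, Complex.smul_im,
      Complex.mul_re, Complex.mul_im, Complex.I_re, Complex.I_im, smul_eq_mul, Complex.normSq_apply]
    ring
  have : 0 ≤ side P Q (z - t • (Complex.I * (Q - P))) := hUP htU
  rw [hside] at this
  nlinarith [mul_pos (show (0 : ℝ) < t from ht) hd]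

lemma side_eq_zero_of_mem_closure {X Y A V c : ℂ} {C : Set ℂ} (hC : IsPreconnected C)
    (hXY : ∀ w ∈ C, side X Y w ≠ 0) (hc : c ∈ C) (hA : A ∈ closure C) (hV : V ∈ closure C)
    (hz : z ∈ openSegment ℝ A V) (hz0 : side X Y z = 0) : side X Y A = 0 := by
  obtain ⟨s, t, hs, ht, hst, rfl⟩ := hz
  have hAc := mul_nonneg_of_mem_closure hC continuous_side hXY hc hA
  have hVc := mul_nonneg_of_mem_closure hC continuous_side hXY hc hV
  rw [side_combo hst] at hz0
  have : side X Y A * side X Y c = 0 := by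
    nlinarith [congrArg (· * side X Y c) hz0, mul_nonneg ht.le hVc, mul_nonneg hs.le hAc]
  exact (mul_eq_zero.mp this).resolve_right (hXY c hc)

end side

lemma toC_mem_sphere (x : C1) : toC x ∈ sphere (0 : ℂ) 1 := by simp [toC, Circle.norm_coe]

lemma toC_injective : Injective toC := fun _ _ h =>
  AddCircle.injective_toCircle one_ne_zero (Subtype.coe_injective h)

@[fun_prop]
lemma continuous_toC : Continuous toC :=
  continuous_subtype_val.comp AddCircle.continuous_toCircle

/-- For `A ≠ W` on the unit circle, the cotangent of half the angle from `A` to `W`. -/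
def cotHalfAngle (A W : ℂ) : ℝ := 2 * side 0 A W / Complex.normSq (W - A)

lemma side_eq_mul_cotHalfAngle_sub {A V W : ℂ} (hA : Complex.normSq A = 1)
    (hV : Complex.normSq V = 1) (hW : Complex.normSq W = 1) (hVA : V ≠ A) (hWA : W ≠ A) :
    side A V W = Complex.normSq (V - A) * Complex.normSq (W - A) / 4 *
      (cotHalfAngle A V - cotHalfAngle A W) := by
  have hV0 : Complex.normSq (V - A) ≠ 0 := by simpa [sub_eq_zero] using hVA
  have hW0 : Complex.normSq (W - A) ≠ 0 := by simpa [sub_eq_zero] using hWA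
  have key : 2 * side A V W =
      Complex.normSq (W - A) * side 0 A V - Complex.normSq (V - A) * side 0 A W := by
    simp only [side, Complex.normSq_apply, Complex.sub_re, Complex.sub_im,
      sub_zero] at *
    linear_combination (-(A.re * V.im - A.im * V.re - (A.re * W.im - A.im * W.re))
      - 2 * (V.re * W.im - V.im * W.re)) * hA + (A.re * W.im - A.im * W.re) * hV
      - (A.re * V.im - A.im * V.re) * hW
  unfold cotHalfAngle
  field_simp
  linear_combination 2 * key

lemma normSq_toC (x : C1) : Complex.normSq (toC x) = 1 :=
  normSq_eq_one_of_mem_sphere (toC_mem_sphere x)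

lemma exists_forall_side_nonneg (F : Finset C1) (a : C1) (hF : ∃ w ∈ F, w ≠ a) :
    ∃ v ∈ F, v ≠ a ∧ ∀ w ∈ F, 0 ≤ side (toC a) (toC v) (toC w) := by
  obtain ⟨w₀, hw₀, hw₀a⟩ := hF
  obtain ⟨v, hv, hmax⟩ := (F.erase a).exists_max_image (cotHalfAngle (toC a) ∘ toC)
    ⟨w₀, Finset.mem_erase.mpr ⟨hw₀a, hw₀⟩⟩
  obtain ⟨hva, hvF⟩ := Finset.mem_erase.mp hv
  refine ⟨v, hvF, hva, fun w hw => ?_⟩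
  rcases eq_or_ne w a with rfl | hwa
  · simp
  rw [side_eq_mul_cotHalfAngle_sub (normSq_toC a) (normSq_toC v) (normSq_toC w)
    (toC_injective.ne hva) (toC_injective.ne hwa)]
  exact mul_nonneg (div_nonneg (mul_nonneg (Complex.normSq_nonneg _) (Complex.normSq_nonneg _))
    zero_le_four) (sub_nonneg.mpr (hmax w (Finset.mem_erase.mpr ⟨hwa, hw⟩)))

lemma side_mul_side_pos_of_not_linked {a b x y : C1} (hab : a ≠ b)
    (hx : x ∈ ({a, b}ᶜ : Set C1)) (hy : y ∈ ({a, b}ᶜ : Set C1)) (h : ¬ Linked a b x y) :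
    0 < side (toC a) (toC b) (toC x) * side (toC a) (toC b) (toC y) := by
  have hxy : connectedComponentIn ({a, b}ᶜ : Set C1) x = connectedComponentIn {a, b}ᶜ y := by
    by_contra hne
    exact h ⟨hx, hy, hne⟩
  refine mul_pos_of_isPreconnected (f := side (toC a) (toC b) ∘ toC)
    isPreconnected_connectedComponentIn (continuous_side.comp continuous_toC).continuousOn
    (fun z hz h0 => ?_)
    (mem_connectedComponentIn hx) (hxy ▸ mem_connectedComponentIn hy)
  refine connectedComponentIn_subset _ _ hz ?_
  rcases eq_or_eq_of_side_eq_zero (toC_mem_sphere a) (toC_mem_sphere b)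
    (toC_injective.ne hab) (toC_mem_sphere z) h0 with h | h
  · exact .inl (toC_injective h)
  · exact .inr (toC_injective h)

end Lamination

open Lamination

section

variable {Λ : Set (C1 × C1)}

lemma mem_chords_of_mem_segment {l : C1 × C1} (hl : l ∈ Λ) {z : ℂ}
    (hz : z ∈ segment ℝ (toC l.1) (toC l.2)) : z ∈ chords Λ :=
  mem_iUnion₂.mpr ⟨l, hl, hz⟩

lemma IsLamination.side_ne_zero (hΛ : IsLamination Λ) {l : C1 × C1} (hl : l ∈ Λ) {z : ℂ}
    (hz : z ∈ ball (0 : ℂ) 1 \ chords Λ) : side (toC l.1) (toC l.2) z ≠ 0 := fun h =>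
  hz.2 <| mem_chords_of_mem_segment hl <| mem_segment_of_side_eq_zero (toC_mem_sphere _)
    (toC_mem_sphere _) (toC_injective.ne (hΛ.ne l hl)) (ball_subset_closedBall hz.1) h

/-- Chords accumulate only on chords or on the circle, since `Λ` is closed off the diagonal. -/
lemma IsLamination.isOpen_ball_diff_chords (hΛ : IsLamination Λ) :
    IsOpen (ball (0 : ℂ) 1 \ chords Λ) := by
  set Φ : (C1 × C1) × ℝ → ℂ := fun q => toC q.1.1 + q.2 • (toC q.1.2 - toC q.1.1)
  have hK : IsCompact (Φ '' (closure Λ ×ˢ Icc 0 1)) :=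
    (isClosed_closure.isCompact.prod isCompact_Icc).image (by simp only [Φ]; fun_prop)
  suffices ball (0 : ℂ) 1 \ chords Λ = ball 0 1 \ Φ '' (closure Λ ×ˢ Icc 0 1) by
    rw [this]; exact isOpen_ball.sdiff hK.isClosed
  refine Set.ext fun z => and_congr_right fun hz => not_congr ⟨fun h => ?_, ?_⟩
  · obtain ⟨l, hl, hzl⟩ := mem_iUnion₂.mp h
    rw [segment_eq_image'] at hzl
    obtain ⟨t, ht, rfl⟩ := hzl
    exact ⟨(l, t), ⟨subset_closure hl, ht⟩, rfl⟩
  · rintro ⟨⟨l, t⟩, ⟨hl, ht⟩, rfl⟩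
    by_cases hl12 : l.1 = l.2
    · refine absurd hz fun hz => ?_
      simp only [Φ, hl12, sub_self, smul_zero, add_zero, mem_ball_zero_iff] at hz
      exact hz.ne (mem_sphere_zero_iff_norm.mp (toC_mem_sphere _))
    · refine mem_chords_of_mem_segment (hΛ.isClosed l hl hl12) ?_
      rw [segment_eq_image']
      exact ⟨t, ht, rfl⟩

/-- The gap is an ideal polygon with vertex `a`. A point `z` inside its edge `[a, v]` is not in the
open region, so it lies on a leaf; that leaf keeps the region on one side, so its line contains
the whole edge and the leaf ends at `a`. -/
lemma VeryFull.mem_ends_of_mem_closure (hΛ : VeryFull Λ) {m : ℂ} {a : C1}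
    (hm : m ∈ ball (0 : ℂ) 1 \ chords Λ)
    (ha : toC a ∈ closure (connectedComponentIn (ball (0 : ℂ) 1 \ chords Λ) m)) :
    a ∈ Ends Λ := by
  set C := connectedComponentIn (ball (0 : ℂ) 1 \ chords Λ) m
  have hCopen : IsOpen C := hΛ.1.isOpen_ball_diff_chords.connectedComponentIn
  obtain ⟨F, hF3, hP⟩ := hΛ.2 _ ⟨m, hm, rfl⟩
  obtain ⟨v, hvF, hva, hv⟩ := exists_forall_side_nonneg F a (F.exists_mem_ne (by omega) a)
  have hAV : toC a ≠ toC v := toC_injective.ne hva.symm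
  have hhalf : closure C ⊆ {w | 0 ≤ side (toC a) (toC v) w} := by
    rw [hP]
    refine convexHull_min (by rintro _ ⟨w, hw, rfl⟩; exact hv w hw) ?_
    intro z hz w hw s t hs ht hst
    change 0 ≤ side _ _ _ at hz hw ⊢
    rw [side_combo hst]
    positivity
  obtain ⟨z, hz⟩ : (openSegment ℝ (toC a) (toC v)).Nonempty :=
    ⟨_, ⟨2⁻¹, 2⁻¹, by norm_num, by norm_num, by norm_num, rfl⟩⟩
  have hvC : toC v ∈ closure C := hP ▸ subset_convexHull ℝ _ ⟨v, hvF, rfl⟩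
  have hzC : z ∈ closure C \ C := by
    refine ⟨hP ▸ (convex_convexHull ℝ _).openSegment_subset (hP ▸ ha) (hP ▸ hvC) hz,
      fun hzC => ?_⟩
    exact (side_pos_of_isOpen hCopen (subset_closure.trans hhalf) hAV hzC).ne'
      (side_eq_zero_of_mem_segment (openSegment_subset_segment _ _ _ hz))
  obtain ⟨l, hl, hzl⟩ : ∃ l ∈ Λ, z ∈ segment ℝ (toC l.1) (toC l.2) := by
    by_contra! h
    refine hzC.2 (mem_connectedComponentIn_of_mem_closure hΛ.1.isOpen_ball_diff_chords
      ⟨openSegment_subset_ball (toC_mem_sphere a) (toC_mem_sphere v) hAV hz, ?_⟩ hzC.1)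
    exact fun hzΛ => let ⟨l, hl, hzl⟩ := mem_iUnion₂.mp hzΛ; h l hl hzl
  have hA : side (toC l.1) (toC l.2) (toC a) = 0 :=
    side_eq_zero_of_mem_closure isPreconnected_connectedComponentIn
      (fun w hw => hΛ.1.side_ne_zero hl (connectedComponentIn_subset _ _ hw))
      (mem_connectedComponentIn hm) ha hvC hz (side_eq_zero_of_mem_segment hzl)
  rcases eq_or_eq_of_side_eq_zero (toC_mem_sphere _) (toC_mem_sphere _)
    (toC_injective.ne (hΛ.1.ne l hl)) (toC_mem_sphere a) hA with h | h
  · exact ⟨l.2, toC_injective h ▸ hl⟩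
  · exact ⟨l.1, toC_injective h ▸ hΛ.1.symm l hl⟩

theorem VeryFull.exists_linked (hΛ : VeryFull Λ) {a b : C1} (hab : a ≠ b) (ha : a ∉ Ends Λ)
    (hb : b ∉ Ends Λ) : ∃ l ∈ Λ, Linked a b l.1 l.2 := by
  by_contra! hunlinked
  have hends : ∀ x ∈ Ends Λ, x ∈ ({a, b}ᶜ : Set C1) := by
    rintro x hx (rfl | rfl)
    exacts [ha hx, hb hx]
  have hseg : openSegment ℝ (toC a) (toC b) ⊆ ball 0 1 \ chords Λ := fun z hz => by
    refine ⟨openSegment_subset_ball (toC_mem_sphere a) (toC_mem_sphere b)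
      (toC_injective.ne hab) hz, fun hzΛ => ?_⟩
    obtain ⟨l, hl, hzl⟩ := mem_iUnion₂.mp hzΛ
    exact side_ne_zero_of_mem_segment (side_mul_side_pos_of_not_linked hab
      (hends _ ⟨_, hl⟩) (hends _ ⟨_, hΛ.1.symm l hl⟩) (hunlinked l hl)) hzl
      (side_eq_zero_of_mem_segment (openSegment_subset_segment _ _ _ hz))
  obtain ⟨m, hm⟩ : (openSegment ℝ (toC a) (toC b)).Nonempty :=
    ⟨_, ⟨2⁻¹, 2⁻¹, by norm_num, by norm_num, by norm_num, rfl⟩⟩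
  refine ha (hΛ.mem_ends_of_mem_closure (hseg hm) (closure_mono ?_
    (segment_subset_closure_openSegment (left_mem_segment ℝ (toC a) (toC b)))))
  exact (convex_openSegment _ _).isPreconnected.subset_connectedComponentIn hm hseg

lemma InvariantUnder.iterate {h : C1 ≃ₜ C1} (hh : InvariantUnder h Λ) (n : ℕ) :
    ∀ p ∈ Λ, ((⇑h)^[n] p.1, (⇑h)^[n] p.2) ∈ Λ := by
  induction n with
  | zero => simp
  | succ n ih =>
    intro p hp
    simpa only [iterate_succ_apply'] using hh _ (ih p hp)

lemma IsLamination.mem_of_tendsto_iterate (hΛ : IsLamination Λ) {h : C1 ≃ₜ C1}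
    (hh : InvariantUnder h Λ) {p q y : C1} (hp : h p = p) (hpq : p ≠ q)
    (hy : Tendsto (fun n => (⇑h)^[n] y) atTop (𝓝 q)) (hl : (p, y) ∈ Λ) : (p, q) ∈ Λ :=
  hΛ.isClosed (p, q) (mem_closure_of_tendsto (tendsto_const_nhds.prodMk_nhds hy)
    (Eventually.of_forall fun n => by simpa [iterate_fixed hp] using hh.iterate n _ hl)) hpq

end

theorem stmt_7_general (G : Set (C1 ≃ₜ C1)) (hG : IsHomeoGroup G)
    (g : C1 ≃ₜ C1) (hg : g ∈ G) (a b : C1)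
    (hab : a ≠ b) (hfix : fixedPoints ⇑g = {a, b})
    (hatt : ∀ x, x ≠ b → Tendsto (fun n => (⇑g)^[n] x) atTop (nhds a))
    (hrep : ∀ x, x ≠ a → Tendsto (fun n => (⇑g.symm)^[n] x) atTop (nhds b))
    (Λ : Set (C1 × C1)) (hΛ : VeryFull Λ) (hinv : Invariant G Λ)
    (hno : (a, b) ∉ Λ) : ∃ l ∈ Λ, Linked a b l.1 l.2 := by
  have hga : g a = a := (hfix ▸ mem_insert a {b} : a ∈ fixedPoints g)
  have hgb : g b = b := (hfix ▸ mem_insert_of_mem a rfl : b ∈ fixedPoints g)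
  refine hΛ.exists_linked hab (fun ⟨y, hy⟩ => hno ?_)
    (fun ⟨y, hy⟩ => hno (hΛ.1.symm (b, a) ?_))
  · exact hΛ.1.mem_of_tendsto_iterate (hinv _ (hG.2.1 g hg)) (g.symm_apply_eq.mpr hga.symm)
      hab (hrep y (hΛ.1.ne _ hy).symm) hy
  · exact hΛ.1.mem_of_tendsto_iterate (hinv g hg) hgb hab.symm (hatt y (hΛ.1.ne _ hy).symm) hy

theorem stmt_7 (G : Set (C1 ≃ₜ C1)) (hG : IsHomeoGroup G)
    (hGo : ∀ g ∈ G, OrientationPreserving g) (g : C1 ≃ₜ C1) (hg : g ∈ G) (a b : C1)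
    (hab : a ≠ b) (hfix : fixedPoints ⇑g = {a, b})
    (hatt : ∀ x, x ≠ b → Tendsto (fun n => (⇑g)^[n] x) atTop (nhds a))
    (hrep : ∀ x, x ≠ a → Tendsto (fun n => (⇑g.symm)^[n] x) atTop (nhds b))
    (Λ : Set (C1 × C1)) (hΛ : VeryFull Λ) (hinv : Invariant G Λ)
    (hno : (a, b) ∉ Λ) : ∃ l ∈ Λ, Linked a b l.1 l.2 :=
  stmt_7_general G hG g hg a b hab hfix hatt hrep Λ hΛ hinv hno
end
end

section
/- Let R be an irrational rotation of S^1 and let R̃ ∈ Homeo⁺(S^1) be obtained from R by Denjoy blow-up of one orbit, with f: S^1 → S^1 the monotone semiconjugacy collapsing each blown-up interval (f ∘ R̃ = R ∘ f). If Λ is an R̃-invariant lamination of S^1, then every leaf l of Λ is degenerate under f, i.e., f maps the two endpoints of l to the same point of S^1 (equivalently, both endpoints of l lie in the closure of a single blown-up interval). -/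
open Set Metric Filter Topology Function
noncomputable section

namespace Stmt17Aux

/-- integers are zero in the circle -/
lemma coe_int_eq_zero (z : ℤ) : (((z : ℝ)) : C1) = 0 := by
  rw [AddCircle.coe_eq_zero_iff]
  exact ⟨z, by simp⟩

lemma coe_inj {s t : ℝ} (hs : s ∈ Ico (0:ℝ) 1) (ht : t ∈ Ico (0:ℝ) 1)
    (h : ((s : ℝ) : C1) = ((t : ℝ) : C1)) : s = t := by
  have hs' : s ∈ Ico (0:ℝ) (0 + 1) := by simpa using hs
  have ht' : t ∈ Ico (0:ℝ) (0 + 1) := by simpa using ht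
  exact (AddCircle.coe_eq_coe_iff_of_mem_Ico hs' ht').mp h

lemma coe_ne_zero {s : ℝ} (hs : s ∈ Ioo (0:ℝ) 1) : ((s : ℝ) : C1) ≠ 0 := by
  intro h
  have : s = (0:ℝ) := coe_inj ⟨le_of_lt hs.1, hs.2⟩ (by constructor <;> norm_num)
    (by simpa using h)
  exact absurd this (ne_of_gt hs.1)

lemma exists_rep (z : C1) : ∃ s : ℝ, s ∈ Ico (0:ℝ) 1 ∧ ((s:ℝ) : C1) = z := by
  have h := AddCircle.coe_image_Ico_eq (p := (1:ℝ)) (a := 0)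
  have hz : z ∈ (((↑) : ℝ → C1) '' Ico 0 (0+1)) := by rw [h]; trivial
  obtain ⟨s, hs, hh⟩ := hz
  exact ⟨s, by simpa using hs, hh⟩

/-- An arc based at `a` with parameter set `I`. -/
def arcS (a : C1) (I : Set ℝ) : Set C1 := (fun s : ℝ => a + ((s:ℝ) : C1)) '' I

lemma mem_arcS {a : C1} {I : Set ℝ} {s : ℝ} (hs : s ∈ I) :
    a + ((s:ℝ) : C1) ∈ arcS a I := ⟨s, hs, rfl⟩

lemma isOpen_arcS (a : C1) {I : Set ℝ} (hI : IsOpen I) : IsOpen (arcS a I) := by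
  have h1 : IsOpenMap (fun s : ℝ => ((s:ℝ) : C1)) := QuotientAddGroup.isOpenMap_coe
  have h2 : IsOpenMap (fun x : C1 => a + x) := (Homeomorph.addLeft a).isOpenMap
  have heq : arcS a I = (fun x : C1 => a + x) '' ((fun s : ℝ => ((s:ℝ):C1)) '' I) := by
    rw [Set.image_image]
    rfl
  rw [heq]
  exact h2 _ (h1 _ hI)

lemma continuous_param (a : C1) : Continuous (fun s : ℝ => a + ((s:ℝ) : C1)) :=
  continuous_const.add (AddCircle.continuous_mk' 1)

lemma precon_arcS (a : C1) {I : Set ℝ} (hI : IsPreconnected I) : IsPreconnected (arcS a I) :=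
  hI.image _ (continuous_param a).continuousOn

lemma arcS_subset_compl {a b : C1} {τ : ℝ} (hτ : τ ∈ Ioo (0:ℝ) 1) (hb : b = a + ((τ:ℝ) : C1))
    {I : Set ℝ} (hI : I ⊆ Ioo (0:ℝ) 1) (h0 : τ ∉ I) : arcS a I ⊆ ({a, b}ᶜ : Set C1) := by
  rintro _ ⟨s, hs, rfl⟩
  have hsI : s ∈ Ioo (0:ℝ) 1 := hI hs
  simp only [Set.mem_compl_iff, Set.mem_insert_iff, Set.mem_singleton_iff, not_or]
  constructor
  · intro h
    have : ((s:ℝ) : C1) = 0 := by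
      have := h
      rwa [add_eq_left] at this
    exact coe_ne_zero hsI this
  · intro h
    rw [hb] at h
    have : s = τ := coe_inj ⟨le_of_lt hsI.1, hsI.2⟩ ⟨le_of_lt hτ.1, hτ.2⟩
      (by exact add_left_cancel h)
    exact h0 (this ▸ hs)

lemma compl_subset_union {a b : C1} {τ : ℝ} (hτ : τ ∈ Ioo (0:ℝ) 1) (hb : b = a + ((τ:ℝ) : C1)) :
    ({a, b}ᶜ : Set C1) ⊆ arcS a (Ioo 0 τ) ∪ arcS a (Ioo τ 1) := by
  intro z hz
  simp only [Set.mem_compl_iff, Set.mem_insert_iff, Set.mem_singleton_iff, not_or] at hz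
  obtain ⟨s, hs, hsz⟩ := exists_rep (z - a)
  have hz' : z = a + ((s:ℝ):C1) := by rw [hsz]; abel
  have hs0 : s ≠ 0 := by
    rintro rfl
    exact hz.1 (by simpa using hz')
  have hsτ : s ≠ τ := by
    rintro rfl
    exact hz.2 (by rw [hz', hb])
  rcases lt_or_gt_of_ne hsτ with h | h
  · exact Or.inl ⟨s, ⟨lt_of_le_of_ne hs.1 (Ne.symm hs0), h⟩, hz'.symm⟩
  · exact Or.inr ⟨s, ⟨h, hs.2⟩, hz'.symm⟩

lemma arcS_disjoint {a : C1} {I J : Set ℝ} (hI : I ⊆ Ico (0:ℝ) 1) (hJ : J ⊆ Ico (0:ℝ) 1)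
    (hIJ : I ∩ J = ∅) : arcS a I ∩ arcS a J = ∅ := by
  ext z
  simp only [Set.mem_inter_iff, Set.mem_empty_iff_false, iff_false, not_and]
  rintro ⟨s, hs, rfl⟩ ⟨t, ht, h⟩
  have : t = s := coe_inj (hJ ht) (hI hs) (add_left_cancel h)
  subst this
  exact absurd hIJ (by rw [Set.eq_empty_iff_forall_notMem]; push_neg; exact ⟨t, hs, ht⟩)

lemma not_precon {K U V : Set C1} (hK : IsPreconnected K) (hU : IsOpen U) (hV : IsOpen V)
    (hUV : U ∩ V = ∅) (hsub : K ⊆ U ∪ V) (h1 : (K ∩ U).Nonempty) (h2 : (K ∩ V).Nonempty) :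
    False := by
  obtain ⟨x, hx⟩ := hK U V hU hV hsub h1 h2
  rw [hUV] at hx
  exact hx.2

lemma linked_of_arcs {a b z w : C1} {τ : ℝ} (hτ : τ ∈ Ioo (0:ℝ) 1) (hb : b = a + ((τ:ℝ) : C1))
    (hz : z ∈ arcS a (Ioo 0 τ)) (hw : w ∈ arcS a (Ioo τ 1)) : Linked a b z w := by
  have hIoo1 : Ioo (0:ℝ) τ ⊆ Ioo 0 1 := Ioo_subset_Ioo le_rfl (le_of_lt hτ.2)
  have hIoo2 : Ioo τ (1:ℝ) ⊆ Ioo 0 1 := Ioo_subset_Ioo (le_of_lt hτ.1) le_rfl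
  have hzc : z ∈ ({a,b}ᶜ : Set C1) :=
    arcS_subset_compl hτ hb hIoo1 (fun h => absurd h.2 (lt_irrefl τ)) hz
  have hwc : w ∈ ({a,b}ᶜ : Set C1) :=
    arcS_subset_compl hτ hb hIoo2 (fun h => absurd h.1 (lt_irrefl τ)) hw
  refine ⟨hzc, hwc, ?_⟩
  intro heq
  have hK : IsPreconnected (connectedComponentIn ({a,b}ᶜ : Set C1) z) :=
    isPreconnected_connectedComponentIn
  have hzK : z ∈ connectedComponentIn ({a,b}ᶜ : Set C1) z := mem_connectedComponentIn hzc
  have hwK : w ∈ connectedComponentIn ({a,b}ᶜ : Set C1) z := by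
    rw [heq]; exact mem_connectedComponentIn hwc
  refine not_precon hK (isOpen_arcS a isOpen_Ioo) (isOpen_arcS a isOpen_Ioo) ?_ ?_ ⟨z, hzK, hz⟩
    ⟨w, hwK, hw⟩
  · exact arcS_disjoint (fun x hx => ⟨le_of_lt (hIoo1 hx).1, (hIoo1 hx).2⟩)
      (fun x hx => ⟨le_of_lt (hIoo2 hx).1, (hIoo2 hx).2⟩)
      (by rw [Set.eq_empty_iff_forall_notMem]; rintro x ⟨h1, h2⟩; exact absurd h2.1 (not_lt.mpr (le_of_lt h1.2)))
  · exact Set.Subset.trans (connectedComponentIn_subset _ _) (compl_subset_union hτ hb)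

lemma irr_ne {α : ℝ} (hα : Irrational α) {k : ℕ} (hk : 0 < k) (z : ℤ) : (k:ℝ) * α ≠ (z:ℝ) := by
  intro h
  have hk' : (k:ℝ) ≠ 0 := Nat.cast_ne_zero.mpr hk.ne'
  apply hα
  refine ⟨(z : ℚ) / (k : ℚ), ?_⟩
  push_cast
  field_simp
  linarith [h]


lemma exists_small {α : ℝ} (hα : Irrational α) {ε : ℝ} (hε : 0 < ε) :
    ∃ n : ℕ, 0 < n ∧ ∃ s : ℝ, s ∈ Ioo 0 ε ∧ (((n:ℝ) * α : ℝ) : C1) = ((s:ℝ) : C1) := by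
  suffices h : ∀ ε' : ℝ, 0 < ε' → ε' ≤ 1/2 →
      ∃ n : ℕ, 0 < n ∧ ∃ s : ℝ, s ∈ Ioo 0 ε' ∧ (((n:ℝ) * α : ℝ) : C1) = ((s:ℝ) : C1) by
    obtain ⟨n, hn, s, hs, h'⟩ := h (min ε (1/2)) (lt_min hε (by norm_num)) (min_le_right _ _)
    exact ⟨n, hn, s, ⟨hs.1, lt_of_lt_of_le hs.2 (min_le_left _ _)⟩, h'⟩
  clear hε ε
  intro ε hε he2
  -- pigeonhole
  have hbound : ∀ n : ℕ, ⌊Int.fract ((n:ℝ) * α) / ε⌋₊ < ⌊(1:ℝ)/ε⌋₊ + 1 := by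
    intro n
    have h1 : Int.fract ((n:ℝ) * α) / ε ≤ 1 / ε := by
      gcongr
      exact le_of_lt (Int.fract_lt_one _)
    exact Nat.lt_succ_of_le (Nat.floor_mono h1)
  obtain ⟨m, n, hmn, heq⟩ := Finite.exists_ne_map_eq_of_infinite
    (fun n : ℕ => (⟨⌊Int.fract ((n:ℝ) * α) / ε⌋₊, hbound n⟩ : Fin (⌊(1:ℝ)/ε⌋₊ + 1)))
  have heq' : ⌊Int.fract ((m:ℝ) * α) / ε⌋₊ = ⌊Int.fract ((n:ℝ) * α) / ε⌋₊ := by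
    simpa using congrArg Fin.val heq
  -- from same bucket to distance < ε
  have hclose : ∀ a b : ℝ, 0 ≤ a → 0 ≤ b → ⌊a / ε⌋₊ = ⌊b / ε⌋₊ → a - b < ε := by
    intro a b ha hb hab
    have hA : a < ((⌊a/ε⌋₊:ℝ) + 1) * ε := by
      have h0 := Nat.lt_floor_add_one (a/ε)
      have : a / ε * ε < ((⌊a/ε⌋₊:ℝ) + 1) * ε := by nlinarith
      rwa [div_mul_cancel₀ _ (ne_of_gt hε)] at this
    have hB : ((⌊b/ε⌋₊:ℝ)) * ε ≤ b := by
      have h0 := Nat.floor_le (show (0:ℝ) ≤ b/ε by positivity)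
      have : ((⌊b/ε⌋₊:ℝ)) * ε ≤ b / ε * ε := by nlinarith
      rwa [div_mul_cancel₀ _ (ne_of_gt hε)] at this
    rw [hab] at hA
    linarith
  -- the main construction from a close pair
  have main : ∀ m n : ℕ, m < n →
      |Int.fract ((n:ℝ) * α) - Int.fract ((m:ℝ) * α)| < ε →
      ∃ n' : ℕ, 0 < n' ∧ ∃ s : ℝ, s ∈ Ioo 0 ε ∧ (((n':ℝ) * α : ℝ) : C1) = ((s:ℝ) : C1) := by
    clear heq' hmn heq hbound m n
    intro m n hmn habs
    have hkpos : 0 < n - m := Nat.sub_pos_of_lt hmn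
    have hkc : ((n - m : ℕ):ℝ) = (n:ℝ) - (m:ℝ) := by
      rw [Nat.cast_sub (le_of_lt hmn)]
    have h1 : (⌊(n:ℝ)*α⌋ : ℝ) + Int.fract ((n:ℝ)*α) = (n:ℝ)*α := Int.floor_add_fract _
    have h2 : (⌊(m:ℝ)*α⌋ : ℝ) + Int.fract ((m:ℝ)*α) = (m:ℝ)*α := Int.floor_add_fract _
    have hkey : ((n - m : ℕ):ℝ) * α =
        (Int.fract ((n:ℝ)*α) - Int.fract ((m:ℝ)*α)) + ((⌊(n:ℝ)*α⌋ - ⌊(m:ℝ)*α⌋ : ℤ):ℝ) := by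
      rw [hkc]
      push_cast
      linarith
    have hDne : Int.fract ((n:ℝ)*α) - Int.fract ((m:ℝ)*α) ≠ 0 := by
      intro h0
      rw [h0, zero_add] at hkey
      exact irr_ne hα hkpos _ hkey
    rcases lt_or_gt_of_ne hDne with hneg | hpos
    · -- negative difference: set η and bootstrap
      set η := Int.fract ((m:ℝ)*α) - Int.fract ((n:ℝ)*α) with hηdef
      have hη0 : 0 < η := by rw [hηdef]; linarith
      have hηε : η < ε := by
        have := abs_lt.mp habs
        rw [hηdef]; linarith [this.1]
      have hη1 : η < 1 := lt_of_lt_of_le hηε (le_trans he2 (by norm_num))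
      have hkα : ((n - m : ℕ):ℝ) * α = ((⌊(n:ℝ)*α⌋:ℤ):ℝ) - ((⌊(m:ℝ)*α⌋:ℤ):ℝ) - η := by
        rw [hkey, hηdef]; push_cast; ring
      have hM1 : 1 ≤ ⌊1/η⌋₊ := by
        apply Nat.le_floor
        rw [Nat.cast_one]
        exact one_le_one_div hη0 (le_of_lt hη1)
      have hfl : ((⌊1/η⌋₊ : ℕ) : ℝ) ≤ 1/η := Nat.floor_le (by positivity)
      have hup : 1/η < ((⌊1/η⌋₊ : ℕ):ℝ) + 1 := Nat.lt_floor_add_one (1/η)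
      have hle1 : ((⌊1/η⌋₊ : ℕ):ℝ) * η ≤ 1 := by
        rw [← le_div_iff₀ hη0]; exact hfl
      have hMpos : 0 < ⌊1/η⌋₊ * (n - m) :=
        Nat.mul_pos (Nat.lt_of_lt_of_le Nat.zero_lt_one hM1) hkpos
      have hne1 : ((⌊1/η⌋₊ : ℕ):ℝ) * η ≠ 1 := by
        intro hone
        have hcast : ((⌊1/η⌋₊ * (n - m) : ℕ):ℝ) * α =
            (((⌊1/η⌋₊ : ℕ):ℤ) * (⌊(n:ℝ)*α⌋ - ⌊(m:ℝ)*α⌋) - 1 : ℤ) := by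
          push_cast
          linear_combination ((⌊1/η⌋₊ : ℕ):ℝ) * hkα - hone
        exact irr_ne hα hMpos _ hcast
      have hlt1 : ((⌊1/η⌋₊ : ℕ):ℝ) * η < 1 := lt_of_le_of_ne hle1 hne1
      have hgt : 1 < (((⌊1/η⌋₊ : ℕ):ℝ) + 1) * η := by
        rw [div_lt_iff₀ hη0] at hup; linarith
      refine ⟨⌊1/η⌋₊ * (n - m), hMpos, 1 - ((⌊1/η⌋₊ : ℕ):ℝ) * η,
        ⟨by linarith, by nlinarith⟩, ?_⟩
      have hval : ((⌊1/η⌋₊ * (n - m) : ℕ):ℝ) * α = (1 - ((⌊1/η⌋₊ : ℕ):ℝ) * η) +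
          (((⌊1/η⌋₊ : ℕ):ℤ) * (⌊(n:ℝ)*α⌋ - ⌊(m:ℝ)*α⌋) - 1 : ℤ) := by
        push_cast
        linear_combination ((⌊1/η⌋₊ : ℕ):ℝ) * hkα
      rw [hval, AddCircle.coe_add, coe_int_eq_zero, add_zero]
    · -- positive difference
      refine ⟨n - m, hkpos, Int.fract ((n:ℝ)*α) - Int.fract ((m:ℝ)*α),
        ⟨hpos, lt_of_le_of_lt (le_abs_self _) habs⟩, ?_⟩
      rw [hkey, AddCircle.coe_add, coe_int_eq_zero, add_zero]
  have habs : |Int.fract ((n:ℝ) * α) - Int.fract ((m:ℝ) * α)| < ε := by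
    have h1 := hclose _ _ (Int.fract_nonneg ((n:ℝ)*α)) (Int.fract_nonneg ((m:ℝ)*α)) heq'.symm
    have h2 := hclose _ _ (Int.fract_nonneg ((m:ℝ)*α)) (Int.fract_nonneg ((n:ℝ)*α)) heq'
    rw [abs_lt]; constructor <;> linarith
  rcases hmn.lt_or_gt with h | h
  · exact main m n h habs
  · exact main n m h (by rw [abs_sub_comm] at habs; exact habs)

lemma core {f : C1 → C1} (hf : Continuous f) (hmono : ∀ y, IsPreconnected (f ⁻¹' {y}))
    {a b c d : C1} {τ sc sd : ℝ} (hτ : τ ∈ Ioo (0:ℝ) 1) (hb : b = a + ((τ:ℝ) : C1))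
    (hsc : sc ∈ Ioo 0 τ) (hsd : sd ∈ Ioo 0 τ) (hlt : sc < sd)
    (hc : c = a + ((sc:ℝ) : C1)) (hd : d = a + ((sd:ℝ) : C1))
    (h1 : f c ≠ f a) (h2 : f c ≠ f b) (h3 : f d ≠ f a) (h4 : f d ≠ f b)
    (hlink : Linked (f a) (f b) (f c) (f d)) : False := by
  obtain ⟨hfc, hfd, hcomp⟩ := hlink
  -- the arc T from c to d
  set T := arcS a (Icc sc sd) with hT
  have hcT : c ∈ T := hc ▸ mem_arcS (left_mem_Icc.mpr (le_of_lt hlt))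
  have hdT : d ∈ T := hd ▸ mem_arcS (right_mem_Icc.mpr (le_of_lt hlt))
  have hTpre : IsPreconnected T := precon_arcS a isPreconnected_Icc
  have hfT : IsPreconnected (f '' T) := hTpre.image f hf.continuousOn
  -- f '' T must meet {f a, f b}
  have hmeet : ∃ u ∈ T, f u ∈ ({f a, f b} : Set C1) := by
    by_contra hcon
    push_neg at hcon
    have hsub : f '' T ⊆ ({f a, f b}ᶜ : Set C1) := by
      rintro _ ⟨u, hu, rfl⟩; exact hcon u hu
    have := hfT.subset_connectedComponentIn ⟨c, hcT, rfl⟩ hsub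
    exact hcomp (connectedComponentIn_eq (this ⟨d, hdT, rfl⟩))
  obtain ⟨u, ⟨s, hsIcc, hu⟩, hfu⟩ := hmeet
  have hus : u = a + ((s:ℝ) : C1) := hu.symm
  have hune : f u ≠ f c ∧ f u ≠ f d := by
    rcases hfu with h | h
    · rw [h]; exact ⟨Ne.symm h1, Ne.symm h3⟩
    · replace h : f u = f b := h
      rw [h]; exact ⟨Ne.symm h2, Ne.symm h4⟩
  have hssc : s ≠ sc := by
    rintro rfl
    exact hune.1 (by rw [hus, ← hc])
  have hssd : s ≠ sd := by
    rintro rfl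
    exact hune.2 (by rw [hus, ← hd])
  have hsIoo : s ∈ Ioo sc sd :=
    ⟨lt_of_le_of_ne hsIcc.1 (Ne.symm hssc), lt_of_le_of_ne hsIcc.2 hssd⟩
  -- setup the pair (c, d)
  set σ := sd - sc with hσ
  have hσI : σ ∈ Ioo (0:ℝ) 1 := ⟨by linarith [hsIoo.1, hsIoo.2], by
    have := hsd.2; have := hsc.1; have := hτ.2; linarith⟩
  have hdc : d = c + ((σ:ℝ) : C1) := by
    have h' : sc + σ = sd := by rw [hσ]; ring
    rw [hc, hd, add_assoc, ← AddCircle.coe_add, h']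
  -- the fiber F
  set F := f ⁻¹' {f u} with hF
  have hFpre : IsPreconnected F := hmono _
  have huF : u ∈ F := rfl
  -- e := a or b, the appropriate endpoint in the fiber
  have hcoe1 : ((1:ℝ) : C1) = 0 := by exact_mod_cast AddCircle.coe_period 1
  have ha_eq : a = c + (((1 - sc :ℝ)) : C1) := by
    have h' : sc + (1 - sc) = (1:ℝ) := by ring
    rw [hc, add_assoc, ← AddCircle.coe_add, h', hcoe1, add_zero]
  have hb_eq : b = c + (((τ - sc :ℝ)) : C1) := by
    have h' : sc + (τ - sc) = τ := by ring
    rw [hb, hc, add_assoc, ← AddCircle.coe_add, h']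
  have hQa : (1 - sc) ∈ Ioo σ 1 := ⟨by simp only [hσ]; linarith [hsd.2, hτ.2], by linarith [hsc.1]⟩
  have hQb : (τ - sc) ∈ Ioo σ 1 := ⟨by simp only [hσ]; linarith [hsd.2], by linarith [hτ.2, hsc.1]⟩
  have heF : ∃ e ∈ F, e ∈ arcS c (Ioo σ 1) := by
    rcases hfu with h | h
    · exact ⟨a, by simp [hF, h.symm], ha_eq ▸ mem_arcS hQa⟩
    · replace h : f u = f b := h
      exact ⟨b, by simp [hF, h.symm], hb_eq ▸ mem_arcS hQb⟩
  obtain ⟨e, heF', heQ⟩ := heF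
  -- u is in the P arc
  have hu_eq : u = c + (((s - sc :ℝ)) : C1) := by
    have h' : sc + (s - sc) = s := by ring
    rw [hus, hc, add_assoc, ← AddCircle.coe_add, h']
  have hPu : (s - sc) ∈ Ioo (0:ℝ) σ := ⟨by linarith [hsIoo.1], by simp only [hσ]; linarith [hsIoo.2]⟩
  have huP : u ∈ arcS c (Ioo 0 σ) := hu_eq ▸ mem_arcS hPu
  -- F avoids c and d
  have hFsub : F ⊆ ({c, d}ᶜ : Set C1) := by
    intro w hw
    simp only [hF, Set.mem_preimage, Set.mem_singleton_iff] at hw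
    simp only [Set.mem_compl_iff, Set.mem_insert_iff, Set.mem_singleton_iff, not_or]
    constructor
    · rintro rfl; exact hune.1 hw.symm
    · rintro rfl; exact hune.2 hw.symm
  -- contradiction
  have hIoo1 : Ioo (0:ℝ) σ ⊆ Ico 0 1 := fun x hx =>
    ⟨le_of_lt hx.1, lt_of_lt_of_le hx.2 (le_of_lt hσI.2)⟩
  have hIoo2 : Ioo σ (1:ℝ) ⊆ Ico 0 1 := fun x hx =>
    ⟨le_of_lt (lt_trans hσI.1 hx.1), hx.2⟩
  refine not_precon hFpre (isOpen_arcS c isOpen_Ioo) (isOpen_arcS c isOpen_Ioo)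
    (arcS_disjoint hIoo1 hIoo2 ?_) ?_ ⟨u, huF, huP⟩ ⟨e, heF', heQ⟩
  · rw [Set.eq_empty_iff_forall_notMem]
    rintro x ⟨hx1, hx2⟩
    exact absurd hx2.1 (not_lt.mpr (le_of_lt hx1.2))
  · exact Set.Subset.trans hFsub (compl_subset_union hσI hdc)

lemma key {f : C1 → C1} (hf : Continuous f) (hmono : ∀ y, IsPreconnected (f ⁻¹' {y}))
    {a b c d : C1} (hab : a ≠ b)
    (h1 : f c ≠ f a) (h2 : f c ≠ f b) (h3 : f d ≠ f a) (h4 : f d ≠ f b)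
    (hlink : Linked (f a) (f b) (f c) (f d)) : Linked a b c d := by
  -- get the parameter of b relative to a
  obtain ⟨τ, hτ', hτb⟩ := exists_rep (b - a)
  have hτ0 : τ ≠ 0 := by
    rintro rfl
    apply hab
    have : b - a = 0 := by rw [← hτb]; norm_num
    exact (sub_eq_zero.mp this).symm
  have hτI : τ ∈ Ioo (0:ℝ) 1 := ⟨lt_of_le_of_ne hτ'.1 (Ne.symm hτ0), hτ'.2⟩
  have hb : b = a + ((τ:ℝ) : C1) := by rw [hτb]; abel
  have hcmem : c ∈ ({a, b}ᶜ : Set C1) := by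
    simp only [Set.mem_compl_iff, Set.mem_insert_iff, Set.mem_singleton_iff, not_or]
    exact ⟨fun h => h1 (by rw [h]), fun h => h2 (by rw [h])⟩
  have hdmem : d ∈ ({a, b}ᶜ : Set C1) := by
    simp only [Set.mem_compl_iff, Set.mem_insert_iff, Set.mem_singleton_iff, not_or]
    exact ⟨fun h => h3 (by rw [h]), fun h => h4 (by rw [h])⟩
  refine ⟨hcmem, hdmem, ?_⟩
  intro heq
  -- c and d lie in a common connected subset K of the complement
  set K := connectedComponentIn ({a,b}ᶜ : Set C1) c with hK
  have hKpre : IsPreconnected K := isPreconnected_connectedComponentIn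
  have hcK : c ∈ K := mem_connectedComponentIn hcmem
  have hdK : d ∈ K := by show d ∈ K; rw [heq]; exact mem_connectedComponentIn hdmem
  have hKsub : K ⊆ arcS a (Ioo 0 τ) ∪ arcS a (Ioo τ 1) :=
    Set.Subset.trans (connectedComponentIn_subset _ _) (compl_subset_union hτI hb)
  -- disjointness of the two arcs
  have hdisj : arcS a (Ioo 0 τ) ∩ arcS a (Ioo τ 1) = ∅ := by
    apply arcS_disjoint (fun x hx => ⟨le_of_lt hx.1, lt_of_lt_of_le hx.2 (le_of_lt hτI.2)⟩)
      (fun x hx => ⟨le_of_lt (lt_trans hτI.1 hx.1), hx.2⟩)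
    rw [Set.eq_empty_iff_forall_notMem]
    rintro x ⟨hx1, hx2⟩
    exact absurd hx2.1 (not_lt.mpr (le_of_lt hx1.2))
  -- K is contained in one of the two arcs
  have honearc : (c ∈ arcS a (Ioo 0 τ) ∧ d ∈ arcS a (Ioo 0 τ)) ∨
      (c ∈ arcS a (Ioo τ 1) ∧ d ∈ arcS a (Ioo τ 1)) := by
    rcases hKsub hcK with hcU | hcV
    · rcases hKsub hdK with hdU | hdV
      · exact Or.inl ⟨hcU, hdU⟩
      · exact absurd (not_precon hKpre (isOpen_arcS a isOpen_Ioo) (isOpen_arcS a isOpen_Ioo)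
          hdisj hKsub ⟨c, hcK, hcU⟩ ⟨d, hdK, hdV⟩) not_false
    · rcases hKsub hdK with hdU | hdV
      · exact absurd (not_precon hKpre (isOpen_arcS a isOpen_Ioo) (isOpen_arcS a isOpen_Ioo)
          hdisj hKsub ⟨d, hdK, hdU⟩ ⟨c, hcK, hcV⟩) not_false
      · exact Or.inr ⟨hcV, hdV⟩
  have hfcd : f c ≠ f d := by
    intro h
    exact hlink.2.2 (by rw [h])
  rcases honearc with ⟨⟨sc, hsc, hcs⟩, ⟨sd, hsd, hds⟩⟩ | ⟨⟨sc, hsc, hcs⟩, ⟨sd, hsd, hds⟩⟩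
  · -- both in the arc (a, b)
    have hscd : sc ≠ sd := by
      rintro rfl
      exact hfcd (by rw [← hcs, ← hds])
    rcases lt_or_gt_of_ne hscd with hlt | hgt
    · exact core hf hmono hτI hb hsc hsd hlt hcs.symm hds.symm h1 h2 h3 h4 hlink
    · exact core hf hmono hτI hb hsd hsc hgt hds.symm hcs.symm h3 h4 h1 h2
        ⟨hlink.2.1, hlink.1, (hlink.2.2).symm⟩
  · -- both in the arc (b, a): swap the roles of a and b
    have hτI' : (1 - τ) ∈ Ioo (0:ℝ) 1 := ⟨by linarith [hτI.2], by linarith [hτI.1]⟩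
    have hcoe1 : ((1:ℝ) : C1) = 0 := by exact_mod_cast AddCircle.coe_period 1
    have ha' : a = b + (((1 - τ :ℝ)) : C1) := by
      have h' : τ + (1 - τ) = (1:ℝ) := by ring
      rw [hb, add_assoc, ← AddCircle.coe_add, h', hcoe1, add_zero]
    have hcs' : c = b + (((sc - τ :ℝ)) : C1) := by
      have h' : τ + (sc - τ) = sc := by ring
      rw [← hcs, hb, add_assoc, ← AddCircle.coe_add, h']
    have hds' : d = b + (((sd - τ :ℝ)) : C1) := by
      have h' : τ + (sd - τ) = sd := by ring
      rw [← hds, hb, add_assoc, ← AddCircle.coe_add, h']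
    have hsc' : sc - τ ∈ Ioo 0 (1 - τ) := ⟨by linarith [hsc.1], by linarith [hsc.2]⟩
    have hsd' : sd - τ ∈ Ioo 0 (1 - τ) := ⟨by linarith [hsd.1], by linarith [hsd.2]⟩
    have hpair : ({f a, f b} : Set C1) = {f b, f a} := Set.pair_comm _ _
    have hlink' : Linked (f b) (f a) (f c) (f d) := by
      obtain ⟨u1, u2, u3⟩ := hlink
      rw [hpair] at u1 u2 u3
      exact ⟨u1, u2, u3⟩
    have hscd : sc - τ ≠ sd - τ := by
      intro h
      have : sc = sd := by linarith
      subst this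
      exact hfcd (by rw [← hcs, ← hds])
    rcases lt_or_gt_of_ne hscd with hlt | hgt
    · exact core hf hmono hτI' ha' hsc' hsd' hlt hcs' hds' h2 h1 h4 h3 hlink'
    · exact core hf hmono hτI' ha' hsd' hsc' hgt hds' hcs' h4 h3 h2 h1
        ⟨hlink'.2.1, hlink'.1, (hlink'.2.2).symm⟩

end Stmt17Aux

theorem stmt_17 (α : ℝ) (hα : Irrational α) (Rt : C1 ≃ₜ C1) (f : C1 → C1)
    (hf : Continuous f) (hfs : Function.Surjective f)
    (hmono : ∀ y : C1, IsPreconnected (f ⁻¹' {y}))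
    (hsemi : ∀ x : C1, f (Rt x) = f x + ((α : ℝ) : C1))
    (Λ : Set (C1 × C1)) (hΛ : IsLamination Λ) (hinv : InvariantUnder Rt Λ) :
    ∀ p ∈ Λ, f p.1 = f p.2 := by
  intro p hp
  by_contra hne
  obtain ⟨a, b⟩ := p
  simp only at hne
  have hab : a ≠ b := hΛ.ne (a, b) hp
  -- the parameter t of f b relative to f a
  obtain ⟨t, ht', htb⟩ := Stmt17Aux.exists_rep (f b - f a)
  have ht0 : t ≠ 0 := by
    rintro rfl
    apply hne
    have : f b - f a = 0 := by rw [← htb]; norm_num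
    exact (sub_eq_zero.mp this).symm
  have htI : t ∈ Ioo (0:ℝ) 1 := ⟨lt_of_le_of_ne ht'.1 (Ne.symm ht0), ht'.2⟩
  have hfb : f b = f a + ((t:ℝ) : C1) := by rw [htb]; abel
  -- choose n with n·α close to 0
  have hε : 0 < min t (1 - t) := lt_min htI.1 (by linarith [htI.2])
  obtain ⟨n, hn, s, hsI, hs⟩ := Stmt17Aux.exists_small hα hε
  have hst : s < t := lt_of_lt_of_le hsI.2 (min_le_left _ _)
  have hs1t : s < 1 - t := lt_of_lt_of_le hsI.2 (min_le_right _ _)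
  set c := Rt^[n] a with hc
  set d := Rt^[n] b with hd
  -- the iterated leaf is in Λ
  have hcd : ∀ m : ℕ, (Rt^[m] a, Rt^[m] b) ∈ Λ := by
    intro m
    induction m with
    | zero => simpa using hp
    | succ k ih =>
        rw [Function.iterate_succ_apply', Function.iterate_succ_apply']
        exact hinv (Rt^[k] a, Rt^[k] b) ih
  -- semiconjugacy iterated
  have hiter : ∀ (m : ℕ) (x : C1), f (Rt^[m] x) = f x + (((m:ℝ) * α : ℝ) : C1) := by
    intro m
    induction m with
    | zero => intro x; norm_num
    | succ k ih =>
        intro x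
        rw [Function.iterate_succ_apply', hsemi, ih x, add_assoc, ← AddCircle.coe_add]
        congr 2
        push_cast
        ring
  have hfc : f c = f a + ((s:ℝ) : C1) := by rw [hc, hiter n a, hs]
  have hfd : f d = f a + (((t + s : ℝ)) : C1) := by
    rw [hd, hiter n b, hs, hfb, add_assoc, ← AddCircle.coe_add]
  -- the images lie in opposite arcs
  have hzU : f c ∈ Stmt17Aux.arcS (f a) (Ioo 0 t) := by
    rw [hfc]; exact Stmt17Aux.mem_arcS ⟨hsI.1, hst⟩
  have hwV : f d ∈ Stmt17Aux.arcS (f a) (Ioo t 1) := by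
    rw [hfd]; exact Stmt17Aux.mem_arcS ⟨by linarith [hsI.1], by linarith⟩
  have hlinkd : Linked (f a) (f b) (f c) (f d) :=
    Stmt17Aux.linked_of_arcs htI hfb hzU hwV
  -- the inequalities
  have h1 : f c ≠ f a := by
    rw [hfc]
    intro h
    rw [add_eq_left] at h
    exact Stmt17Aux.coe_ne_zero ⟨hsI.1, by linarith [htI.2]⟩ h
  have h2 : f c ≠ f b := by
    rw [hfc, hfb]
    intro h
    have := Stmt17Aux.coe_inj ⟨le_of_lt hsI.1, by linarith [htI.2]⟩
      ⟨le_of_lt htI.1, htI.2⟩ (add_left_cancel h)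
    linarith
  have h3 : f d ≠ f a := by
    rw [hfd]
    intro h
    rw [add_eq_left] at h
    exact Stmt17Aux.coe_ne_zero ⟨by linarith [hsI.1, htI.1], by linarith⟩ h
  have h4 : f d ≠ f b := by
    rw [hfd, hfb]
    intro h
    have := Stmt17Aux.coe_inj ⟨by linarith [hsI.1, htI.1], by linarith⟩
      ⟨le_of_lt htI.1, htI.2⟩ (add_left_cancel h)
    linarith [hsI.1]
  exact hΛ.unlinked (a, b) hp (c, d) (hcd n)
    (Stmt17Aux.key hf hmono hab h1 h2 h3 h4 hlinkd)
end
end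

section
/- Let C be a set of homeomorphisms of S^1. Then C has the convergence property (every infinite sequence of distinct elements of C has a subsequence converging uniformly on compact subsets of S^1 \ {b} to a constant a, for some points a, b ∈ S^1) if and only if C acts properly discontinuously on the space T of ordered triples of distinct points of S^1. -/
open Set Metric Filter Topology Function
noncomputable section

/-- The space of ordered triples of pairwise distinct points of the circle. -/
def TripleSpace : Set (C1 × C1 × C1) := {t | t.1 ≠ t.2.1 ∧ t.1 ≠ t.2.2 ∧ t.2.1 ≠ t.2.2}

/-- The diagonal action of a homeomorphism on triples. -/
def actT (g : C1 ≃ₜ C1) (t : C1 × C1 × C1) : C1 × C1 × C1 := (g t.1, g t.2.1, g t.2.2)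

/-- The convergence property for a set of circle homeomorphisms. -/
def ConvergenceProperty (C : Set (C1 ≃ₜ C1)) : Prop :=
  ∀ g : ℕ → C1 ≃ₜ C1, (∀ i, g i ∈ C) → Function.Injective g →
    ∃ a b : C1, ∃ φ : ℕ → ℕ, StrictMono φ ∧
      ∀ K : Set C1, IsCompact K → K ⊆ {b}ᶜ →
        TendstoUniformlyOn (fun n x => g (φ n) x) (fun _ => a) atTop K

/-- Proper discontinuity of the action on the space of distinct triples. -/
def ProperlyDiscOnTriples (C : Set (C1 ≃ₜ C1)) : Prop :=
  ∀ K : Set (C1 × C1 × C1), K ⊆ TripleSpace → IsCompact K →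
    {g ∈ C | (actT g '' K ∩ K).Nonempty}.Finite


/-!
If infinitely many `g ∈ C` meet a compact `K ⊆ T`, pick triples `tₙ ∈ K` with `gₙ tₙ ∈ K` and
a subsequence converging to `a` off `b`. At least two coordinates of `lim tₙ` differ from `b`,
so the corresponding coordinates of `lim gₙ tₙ` both equal `a`, and `lim gₙ tₙ ∉ T`.

Conversely, work along a non-principal ultrafilter `U` on `ℕ`, along which every sequence in
the circle converges. Proper discontinuity forbids three sequences with distinct limits whose
images under `gₙ` also have distinct limits. Applied to `gₙ⁻¹ v`, this shows that
`v ↦ lim gₙ⁻¹ v` takes at most two values, so some `b` is the limit for infinitely many `v`.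
Applied to `gₙ⁻¹ v → b` (for `v` avoiding two given values) together with two sequences
converging to distinct points other than `b`, it shows that all limits of `gₙ yₙ` with
`yₙ → x ≠ b` agree, i.e. `gₙ → a` locally uniformly on the complement of `b` along `U`.
A diagonal subsequence then converges along `atTop`.
-/

instance : Infinite C1 :=
  have : Infinite (Ico (0 : ℝ) (0 + 1)) := infinite_coe_iff.2 (Ico_infinite (by norm_num))
  .of_injective _ (AddCircle.equivIco 1 0).symm.injective

lemma isOpen_tripleSpace : IsOpen TripleSpace :=
  (isOpen_ne_fun continuous_fst (continuous_fst.comp continuous_snd)).inter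
    ((isOpen_ne_fun continuous_fst (continuous_snd.comp continuous_snd)).inter
      (isOpen_ne_fun (continuous_fst.comp continuous_snd) (continuous_snd.comp continuous_snd)))

lemma Ultrafilter.exists_tendsto {ι X : Type*} [TopologicalSpace X] [CompactSpace X]
    (U : Ultrafilter ι) (f : ι → X) : ∃ x, Tendsto f U (𝓝 x) :=
  ⟨_, (U.map f).le_nhds_lim⟩

lemma exists_infinite_fiber_of_forall_three {α β : Type*} [Infinite α] (f : α → β)
    (h : ∀ x y z, f x ≠ f y → f x ≠ f z → f y ≠ f z → False) :
    ∃ b, (f ⁻¹' {b}).Infinite := by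
  by_contra! hfib
  have hinf : (range f).Infinite := fun hfin => by
    have := hfin.biUnion fun b _ => hfib b
    rw [biUnion_preimage_singleton, preimage_range] at this
    exact infinite_univ this
  obtain ⟨_, ⟨x, rfl⟩⟩ := hinf.nonempty
  obtain ⟨_, ⟨y, rfl⟩, hy⟩ := (hinf.sdiff (finite_singleton (f x))).nonempty
  obtain ⟨_, ⟨z, rfl⟩, hz⟩ := (hinf.sdiff ((finite_singleton (f y)).insert (f x))).nonempty
  simp only [mem_singleton_iff, mem_insert_iff, not_or] at hy hz
  exact h x y z (Ne.symm hy) (Ne.symm hz.1) (Ne.symm hz.2)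

lemma tendstoLocallyUniformlyOn_const_iff {ι α β : Type*} [TopologicalSpace α] [UniformSpace β]
    {F : ι → α → β} {a : β} {p : Filter ι} {s : Set α} (hs : IsOpen s) :
    TendstoLocallyUniformlyOn F (fun _ => a) p s ↔
      ∀ x ∈ s, Tendsto (fun q : ι × α => F q.1 q.2) (p ×ˢ 𝓝 x) (𝓝 a) := by
  simp only [hs.tendstoLocallyUniformlyOn_iff_forall_tendsto, Uniform.tendsto_nhds_right]

lemma exists_strictMono_tendstoUniformlyOn_compl_singleton {X Y : Type*} [MetricSpace X]
    [CompactSpace X] [PseudoMetricSpace Y] {F : ℕ → X → Y} {f : X → Y} {b : X} {l : Filter ℕ}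
    [l.NeBot] (hl : l ≤ atTop)
    (h : ∀ K, IsCompact K → K ⊆ {b}ᶜ → TendstoUniformlyOn F f l K) :
    ∃ φ : ℕ → ℕ, StrictMono φ ∧
      ∀ K, IsCompact K → K ⊆ {b}ᶜ → TendstoUniformlyOn (F ∘ φ) f atTop K := by
  set K : ℕ → Set X := fun j => (ball b (1 / (j + 1)))ᶜ
  have hKb : ∀ j, K j ⊆ {b}ᶜ := fun j x hx hxb => hx (hxb ▸ mem_ball_self (by positivity))
  have hev : ∀ j, ∀ᶠ n in l, ∀ i ∈ Iic j, ∀ x ∈ K i, dist (f x) (F n x) < 1 / (i + 1) :=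
    fun j => (finite_Iic j).eventually_all.2 fun i _ => Metric.tendstoUniformlyOn_iff.1
      (h _ isOpen_ball.isClosed_compl.isCompact (hKb i)) _ (by positivity)
  obtain ⟨φ, hφ, hφK⟩ :=
    extraction_forall_of_frequently fun j => (hev j).frequently.filter_mono hl
  refine ⟨φ, hφ, fun L hL hLb => Metric.tendstoUniformlyOn_iff.2 fun ε hε => ?_⟩
  obtain ⟨r, hr, hrL⟩ := Metric.mem_nhds_iff.1
    (hL.isClosed.isOpen_compl.mem_nhds fun hbL => hLb hbL rfl)
  obtain ⟨m, hm⟩ := exists_nat_one_div_lt (lt_min hr hε)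
  filter_upwards [eventually_ge_atTop m] with k hk x hx
  have hxK : x ∈ K m := fun hxb =>
    hrL (ball_subset_ball (hm.trans_le (min_le_left _ _)).le hxb) hx
  exact (hφK k m hk x hxK).trans (hm.trans_le (min_le_right _ _))

lemma notMem_tripleSpace_of_tendsto {ι : Type*} {l : Filter ι} [l.NeBot]
    {G : ι → C1 ≃ₜ C1} {a b : C1}
    (hG : ∀ x ≠ b, Tendsto (fun q : ι × C1 => G q.1 q.2) (l ×ˢ 𝓝 x) (𝓝 a))
    {t : ι → C1 × C1 × C1} {t₀ s₀ : C1 × C1 × C1} (ht : Tendsto t l (𝓝 t₀))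
    (ht₀ : t₀ ∈ TripleSpace) (hs : Tendsto (fun i => actT (G i) (t i)) l (𝓝 s₀)) :
    s₀ ∉ TripleSpace := by
  have hcoord : ∀ {u : ι → C1} {x y : C1}, x ≠ b → Tendsto u l (𝓝 x) →
      Tendsto (fun i => G i (u i)) l (𝓝 y) → y = a := fun hx hu hy =>
    tendsto_nhds_unique hy ((hG _ hx).comp (tendsto_id.prodMk hu))
  have h₁ : t₀.1 ≠ b → s₀.1 = a := fun hb => hcoord hb ht.fst_nhds hs.fst_nhds
  have h₂ : t₀.2.1 ≠ b → s₀.2.1 = a := fun hb =>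
    hcoord hb ht.snd_nhds.fst_nhds hs.snd_nhds.fst_nhds
  have h₃ : t₀.2.2 ≠ b → s₀.2.2 = a := fun hb =>
    hcoord hb ht.snd_nhds.snd_nhds hs.snd_nhds.snd_nhds
  obtain ⟨ht₁₂, ht₁₃, ht₂₃⟩ := ht₀
  rintro ⟨hs₁₂, hs₁₃, hs₂₃⟩
  grind

theorem ConvergenceProperty.properlyDiscOnTriples {C : Set (C1 ≃ₜ C1)}
    (hC : ConvergenceProperty C) : ProperlyDiscOnTriples C := by
  intro K hKT hK
  by_contra hinf
  let e := Set.Infinite.natEmbedding _ hinf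
  let g : ℕ → C1 ≃ₜ C1 := fun n => e n
  have hmeet : ∀ n, ∃ t ∈ K, actT (g n) t ∈ K := fun n => by
    obtain ⟨_, ⟨t, ht, rfl⟩, hgt⟩ := (e n).2.2
    exact ⟨t, ht, hgt⟩
  choose t htK hgtK using hmeet
  obtain ⟨a, b, φ, -, hφ⟩ :=
    hC g (fun n => (e n).2.1) (Subtype.val_injective.comp e.injective)
  have hloc : ∀ x ≠ b, Tendsto (fun q : ℕ × C1 => g (φ q.1) q.2) (atTop ×ˢ 𝓝 x) (𝓝 a) :=
    (tendstoLocallyUniformlyOn_const_iff isOpen_compl_singleton).1 <|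
      (tendstoLocallyUniformlyOn_iff_forall_isCompact isOpen_compl_singleton).2
        fun K hKb hK => hφ K hK hKb
  obtain ⟨⟨t₀, s₀⟩, ⟨ht₀, hs₀⟩, ψ, hψ, hlim⟩ := (hK.prod hK).tendsto_subseq
    (x := fun n => (t (φ n), actT (g (φ n)) (t (φ n)))) fun n => ⟨htK _, hgtK _⟩
  exact notMem_tripleSpace_of_tendsto (G := fun k => g (φ (ψ k)))
    (fun x hx => (hloc x hx).comp (hψ.tendsto_atTop.prodMap tendsto_id))
    hlim.fst_nhds (hKT ht₀) hlim.snd_nhds (hKT hs₀)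


section ProperlyDiscontinuous

variable {ι : Type*} {C : Set (C1 ≃ₜ C1)} {g : ι → C1 ≃ₜ C1}

lemma ProperlyDiscOnTriples.false_of_tendsto (hPD : ProperlyDiscOnTriples C)
    {F : Filter ((C1 ≃ₜ C1) × (C1 × C1 × C1))} [F.NeBot] (hFC : ∀ᶠ q in F, q.1 ∈ C)
    (hF : Tendsto Prod.fst F cofinite) {t s : C1 × C1 × C1} (ht : t ∈ TripleSpace)
    (hs : s ∈ TripleSpace) (hFt : Tendsto Prod.snd F (𝓝 t))
    (hFs : Tendsto (fun q => actT q.1 q.2) F (𝓝 s)) : False := by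
  obtain ⟨Kt, hKt, htK, hKtT⟩ := exists_compact_subset isOpen_tripleSpace ht
  obtain ⟨Ks, hKs, hsK, hKsT⟩ := exists_compact_subset isOpen_tripleSpace hs
  have hbad : ∀ᶠ q in F, q.1 ∈ {h ∈ C | (actT h '' (Kt ∪ Ks) ∩ (Kt ∪ Ks)).Nonempty} := by
    filter_upwards [hFC, hFt.eventually_mem (mem_interior_iff_mem_nhds.1 htK),
      hFs.eventually_mem (mem_interior_iff_mem_nhds.1 hsK)] with q hqC hqt hqs
    exact ⟨hqC, actT q.1 q.2, ⟨q.2, .inl hqt, rfl⟩, .inr hqs⟩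
  obtain ⟨q, hq, hq'⟩ := (hbad.and (hF.eventually
    (hPD _ (union_subset hKtT hKsT) (hKt.union hKs)).compl_mem_cofinite)).exists
  exact hq' hq

lemma ProperlyDiscOnTriples.exists_infinite_inverse_limits (hPD : ProperlyDiscOnTriples C)
    {U : Ultrafilter ι} (hgC : ∀ᶠ i in U, g i ∈ C) (hgU : Tendsto g U cofinite) :
    ∃ b, {v | Tendsto (fun i => (g i).symm v) U (𝓝 b)}.Infinite := by
  choose f hf using fun v => U.exists_tendsto fun i => (g i).symm v
  obtain ⟨b, hb⟩ := exists_infinite_fiber_of_forall_three f fun v₁ v₂ v₃ h₁₂ h₁₃ h₂₃ =>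
    hPD.false_of_tendsto
      (F := map (fun i => (g i, (g i).symm v₁, (g i).symm v₂, (g i).symm v₃)) U)
      (s := (v₁, v₂, v₃))
      (eventually_map.2 hgC) (tendsto_map'_iff.2 hgU) ⟨h₁₂, h₁₃, h₂₃⟩
      ⟨ne_of_apply_ne f h₁₂, ne_of_apply_ne f h₁₃, ne_of_apply_ne f h₂₃⟩
      (tendsto_map'_iff.2 ((hf v₁).prodMk_nhds ((hf v₂).prodMk_nhds (hf v₃))))
      (tendsto_map'_iff.2 (by simp [Function.comp_def, actT]))
  exact ⟨b, hb.mono fun v hv => (hv : f v = b) ▸ hf v⟩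

lemma ProperlyDiscOnTriples.eq_of_tendsto (hPD : ProperlyDiscOnTriples C) {U : Filter ι}
    (hgC : ∀ᶠ i in U, g i ∈ C) (hgU : Tendsto g U cofinite) {b : C1}
    (hb : {v | Tendsto (fun i => (g i).symm v) U (𝓝 b)}.Infinite)
    {V : Filter (ι × C1)} [V.NeBot] (hV : Tendsto Prod.fst V U) {x x' c c' : C1}
    (hx : x ≠ b) (hx' : x' ≠ b) (hxx' : x ≠ x') (hVx : Tendsto Prod.snd V (𝓝 x))
    (hc : Tendsto (fun q => g q.1 q.2) V (𝓝 c)) (hc' : Tendsto (fun i => g i x') U (𝓝 c')) :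
    c = c' := by
  by_contra hcc'
  obtain ⟨v, hvb, hvc⟩ := (hb.sdiff ((finite_singleton c').insert c)).nonempty
  simp only [mem_insert_iff, mem_singleton_iff, not_or] at hvc
  exact hPD.false_of_tendsto
    (F := map (fun q : ι × C1 => (g q.1, (g q.1).symm v, q.2, x')) V)
    (eventually_map.2 (hV.eventually hgC)) (tendsto_map'_iff.2 (hgU.comp hV))
    ⟨hx.symm, hx'.symm, hxx'⟩ ⟨hvc.1, hvc.2, hcc'⟩
    (tendsto_map'_iff.2 (((hvb : Tendsto _ U _).comp hV).prodMk_nhds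
      (hVx.prodMk_nhds tendsto_const_nhds)))
    (tendsto_map'_iff.2 (by
      simpa [Function.comp_def, actT] using
        tendsto_const_nhds.prodMk_nhds (hc.prodMk_nhds (hc'.comp hV))))

lemma ProperlyDiscOnTriples.tendsto_prod_nhds (hPD : ProperlyDiscOnTriples C)
    {U : Ultrafilter ι} (hgC : ∀ᶠ i in U, g i ∈ C) (hgU : Tendsto g U cofinite) {b : C1}
    (hb : {v | Tendsto (fun i => (g i).symm v) U (𝓝 b)}.Infinite) {x₀ a : C1} (hx₀ : x₀ ≠ b)
    (ha : Tendsto (fun i => g i x₀) U (𝓝 a)) :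
    ∀ x ≠ b, Tendsto (fun q : ι × C1 => g q.1 q.2) (↑U ×ˢ 𝓝 x) (𝓝 a) := by
  intro x hx
  refine tendsto_nhds_of_unique_mapClusterPt fun c hc => ?_
  obtain ⟨V, hVU, hVc⟩ := mapClusterPt_iff_ultrafilter.1 hc
  obtain ⟨x₁, hx₁⟩ := (((finite_singleton x).insert x₀).insert b).infinite_compl.nonempty
  simp only [mem_compl_iff, mem_insert_iff, mem_singleton_iff, not_or] at hx₁
  obtain ⟨c₁, hc₁⟩ := U.exists_tendsto fun i => g i x₁
  have hc : c = c₁ := hPD.eq_of_tendsto hgC hgU hb (tendsto_fst.mono_left hVU) hx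
    hx₁.1 (Ne.symm hx₁.2.2) (tendsto_snd.mono_left hVU) hVc hc₁
  have ha : a = c₁ := hPD.eq_of_tendsto hgC hgU hb (V := map (fun i => (i, x₀)) U)
    (tendsto_map'_iff.2 tendsto_id) hx₀ hx₁.1 (Ne.symm hx₁.2.1)
    (tendsto_map'_iff.2 tendsto_const_nhds) (tendsto_map'_iff.2 ha) hc₁
  exact hc.trans ha.symm

end ProperlyDiscontinuous

theorem ProperlyDiscOnTriples.convergenceProperty {C : Set (C1 ≃ₜ C1)}
    (hPD : ProperlyDiscOnTriples C) : ConvergenceProperty C := by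
  intro g hgC hg
  let U := hyperfilter ℕ
  have hgU : Tendsto g U cofinite := hg.tendsto_cofinite.comp hyperfilter_le_cofinite
  obtain ⟨b, hb⟩ := hPD.exists_infinite_inverse_limits (.of_forall hgC) hgU
  obtain ⟨x₀, hx₀⟩ := exists_ne b
  obtain ⟨a, ha⟩ := U.exists_tendsto fun n => g n x₀
  have hloc : TendstoLocallyUniformlyOn (fun n => ⇑(g n)) (fun _ => a) U {b}ᶜ :=
    (tendstoLocallyUniformlyOn_const_iff isOpen_compl_singleton).2 <|
      hPD.tendsto_prod_nhds (.of_forall hgC) hgU hb hx₀ ha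
  obtain ⟨φ, hφ, hφK⟩ := exists_strictMono_tendstoUniformlyOn_compl_singleton
    Nat.hyperfilter_le_atTop fun K hK hKb =>
      (tendstoLocallyUniformlyOn_iff_forall_isCompact isOpen_compl_singleton).1 hloc K hKb hK
  exact ⟨a, b, φ, hφ, hφK⟩

theorem stmt_18 (C : Set (C1 ≃ₜ C1)) :
    ConvergenceProperty C ↔ ProperlyDiscOnTriples C :=
  ⟨ConvergenceProperty.properlyDiscOnTriples, ProperlyDiscOnTriples.convergenceProperty⟩
end
end

section
/- Suppose G ⊆ Homeo⁺(S^1) acts minimally on S^1 (every orbit is dense) and Λ is a G-invariant lamination with at least one leaf. Then for every ε > 0 there exists a leaf of Λ whose endpoints are at distance less than ε; consequently the closure of Λ in the closed Möbius band contains the entire boundary circle of degenerate leaves. -/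
open Set Metric Filter Topology Function
noncomputable section

/-! Any leaf `{a, a + s}` with `0 < s ≤ 1/2` can be shortened: by minimality some `g ∈ G`
moves `a` into the short arc `a + (0, s)`, and since `g • {a, a + s}` may not link
`{a, a + s}`, the image leaf lies in the closed short arc and is strictly shorter. Hence the leaf
length has no positive minimum on the compact set `closure Λ`, which therefore meets the
diagonal. The set of `x` with `(x, x) ∈ closure Λ` is closed, nonempty and `G`-invariant, so by
minimality it is the whole circle. -/

theorem connectedComponentIn_ne_of_subset_union {X : Type*} [TopologicalSpace X]
    {S U V : Set X} (hU : IsOpen U) (hV : IsOpen V) (hUV : Disjoint U V) (hS : S ⊆ U ∪ V)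
    {x y : X} (hx : x ∈ S) (hy : y ∈ S) (hxU : x ∈ U) (hyV : y ∈ V) :
    connectedComponentIn S x ≠ connectedComponentIn S y := by
  intro h
  have hsub : connectedComponentIn S x ⊆ U :=
    isPreconnected_connectedComponentIn.subset_left_of_subset_union hU hV hUV
      ((connectedComponentIn_subset _ _).trans hS) ⟨x, mem_connectedComponentIn hx, hxU⟩
  exact disjoint_left.1 hUV (hsub (h ▸ mem_connectedComponentIn hy)) hyV

lemma Invariant.closure {G : Set (C1 ≃ₜ C1)} {Λ : Set (C1 × C1)} (hinv : Invariant G Λ) :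
    Invariant G (closure Λ) := fun g hg _ hp =>
  map_mem_closure (f := fun q : C1 × C1 => (g q.1, g q.2)) (by fun_prop) hp
    fun q hq => hinv g hg q hq

namespace CircleLamination

section Arcs

variable (a : C1)

lemma injOn_add_coe : InjOn (fun t : ℝ => a + (t : C1)) (Ico 0 1) := fun t ht u hu h =>
  (AddCircle.coe_eq_coe_iff_of_mem_Ico (a := 0) (by simpa using ht) (by simpa using hu)).1
    (add_left_cancel h)

lemma image_add_coe_Ico : (fun t : ℝ => a + (t : C1)) '' Ico 0 1 = univ := by
  refine eq_univ_of_forall fun x => ?_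
  obtain ⟨t, ht, hxt⟩ : x - a ∈ ((↑) : ℝ → C1) '' Ico 0 (0 + 1) := by
    rw [AddCircle.coe_image_Ico_eq]; trivial
  exact ⟨t, by simpa using ht, by simp only [hxt]; abel⟩

lemma isOpen_image_add_coe {I : Set ℝ} (hI : IsOpen I) :
    IsOpen ((fun t : ℝ => a + (t : C1)) '' I) := by
  rw [← image_image (a + ·)]
  exact (Homeomorph.addLeft a).isOpenMap _ (QuotientAddGroup.isOpenMap_coe _ hI)

lemma compl_pair_eq_image_union {s : ℝ} (hs : s ∈ Ioo (0 : ℝ) 1) :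
    ({a, a + (s : C1)}ᶜ : Set C1) =
      (fun t : ℝ => a + (t : C1)) '' Ioo 0 s ∪ (fun t : ℝ => a + (t : C1)) '' Ioo s 1 := by
  have hpair : ({0, s} : Set ℝ) ⊆ Ico 0 1 := by
    rintro t (rfl | rfl)
    exacts [⟨le_rfl, one_pos⟩, ⟨hs.1.le, hs.2⟩]
  have hsplit : Ico (0 : ℝ) 1 \ {0, s} = Ioo 0 s ∪ Ioo s 1 := by
    ext t
    simp only [Set.mem_sdiff, mem_Ico, mem_insert_iff, mem_singleton_iff, mem_union, mem_Ioo]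
    constructor
    · rintro ⟨⟨h0, h1⟩, hne⟩
      rcases lt_or_gt_of_ne (fun h => hne (Or.inr h)) with h | h
      exacts [Or.inl ⟨lt_of_le_of_ne h0 (fun h => hne (Or.inl h.symm)), h⟩, Or.inr ⟨h, h1⟩]
    · rintro (⟨h0, h1⟩ | ⟨h0, h1⟩)
      · exact ⟨⟨h0.le, h1.trans hs.2⟩, by rintro (rfl | rfl) <;> linarith⟩
      · exact ⟨⟨hs.1.le.trans h0.le, h1⟩, by rintro (rfl | rfl) <;> linarith [hs.1]⟩
  rw [← image_union, ← hsplit, (injOn_add_coe a).image_sdiff_subset hpair, image_add_coe_Ico,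
    compl_eq_univ_sdiff, image_pair, AddCircle.coe_zero, add_zero]

lemma linked_add_coe {s t u : ℝ} (hs : s ∈ Ioo (0 : ℝ) 1) (ht : t ∈ Ioo 0 s)
    (hu : u ∈ Ioo s 1) : Linked a (a + (s : C1)) (a + (t : C1)) (a + (u : C1)) := by
  have hsub := (compl_pair_eq_image_union a hs).le
  have hx : a + (t : C1) ∈ ({a, a + (s : C1)}ᶜ : Set C1) := by
    rw [compl_pair_eq_image_union a hs]; exact Or.inl ⟨t, ht, rfl⟩
  have hy : a + (u : C1) ∈ ({a, a + (s : C1)}ᶜ : Set C1) := by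
    rw [compl_pair_eq_image_union a hs]; exact Or.inr ⟨u, hu, rfl⟩
  have hdisj : Disjoint ((fun t : ℝ => a + (t : C1)) '' Ioo 0 s)
      ((fun t : ℝ => a + (t : C1)) '' Ioo s 1) :=
    Disjoint.image (Ico_disjoint_Ico_same.mono Ioo_subset_Ico_self Ioo_subset_Ico_self)
      (injOn_add_coe a)
      (Ioo_subset_Ico_self.trans (Ico_subset_Ico_right hs.2.le))
      (Ioo_subset_Ico_self.trans (Ico_subset_Ico_left hs.1.le))
  exact ⟨hx, hy, connectedComponentIn_ne_of_subset_union (isOpen_image_add_coe a isOpen_Ioo)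
    (isOpen_image_add_coe a isOpen_Ioo) hdisj hsub hx hy ⟨t, ht, rfl⟩ ⟨u, hu, rfl⟩⟩

end Arcs

lemma norm_coe_le_abs (x : ℝ) : ‖(x : C1)‖ ≤ |x| := by
  simpa using QuotientAddGroup.norm_mk_le_norm (S := AddSubgroup.zmultiples (1 : ℝ)) (m := x)

lemma dist_add_coe_add_coe (a : C1) (t u : ℝ) :
    dist (a + (t : C1)) (a + (u : C1)) = ‖((u - t : ℝ) : C1)‖ := by
  rw [dist_eq_norm_sub', AddCircle.coe_sub, add_sub_add_left_eq_sub]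

lemma exists_eq_add_coe_of_ne {x y : C1} (hxy : x ≠ y) :
    ∃ s : ℝ, 0 < s ∧ dist x y = s ∧ (y = x + (s : C1) ∨ x = y + (s : C1)) := by
  obtain ⟨r, hr, hry⟩ : y - x ∈ ((↑) : ℝ → C1) '' Ioc (-(1 / 2)) (-(1 / 2) + 1) := by
    rw [AddCircle.coe_image_Ioc_eq]; trivial
  have hdist : dist x y = |r| := by
    rw [dist_comm, dist_eq_norm, ← hry, AddCircle.norm_coe_eq_abs_iff (1 : ℝ) one_ne_zero,
      abs_one, abs_le]
    constructor <;> linarith [hr.1, hr.2]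
  have hr0 : r ≠ 0 := by
    rintro rfl
    exact hxy (sub_eq_zero.1 (by simpa using hry.symm)).symm
  rcases lt_or_gt_of_ne hr0 with hneg | hpos
  · refine ⟨-r, neg_pos.2 hneg, hdist.trans (abs_of_neg hneg), Or.inr ?_⟩
    rw [AddCircle.coe_neg, hry]; abel
  · refine ⟨r, hpos, hdist.trans (abs_of_pos hpos), Or.inl ?_⟩
    rw [hry]; abel

variable {G : Set (C1 ≃ₜ C1)} {Λ : Set (C1 × C1)}

lemma exists_leaf_dist_lt_of_add_coe (hmin : ∀ x : C1, Dense {y : C1 | ∃ g ∈ G, y = g x})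
    (hΛ : IsLamination Λ) (hinv : Invariant G Λ) {a : C1} {s : ℝ}
    (hs : s ∈ Ioo (0 : ℝ) 1) (hab : (a, a + (s : C1)) ∈ Λ) :
    ∃ q ∈ Λ, dist q.1 q.2 < s := by
  obtain ⟨_, ⟨g, hg, rfl⟩, t, ht, hgt⟩ := (hmin a).exists_mem_open
    (isOpen_image_add_coe a isOpen_Ioo) ⟨_, s / 2, ⟨half_pos hs.1, half_lt_self hs.1⟩, rfl⟩
  obtain ⟨u, hu, hgu⟩ : g (a + (s : C1)) ∈ (fun t : ℝ => a + (t : C1)) '' Ico 0 1 := by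
    rw [image_add_coe_Ico]; trivial
  have hgab := hinv g hg _ hab
  have hus : u ≤ s := by
    by_contra! hsu
    refine hΛ.unlinked _ hab _ hgab ?_
    simp only [← hgt, ← hgu]
    exact linked_add_coe a hs ht ⟨hsu, hu.2⟩
  refine ⟨_, hgab, ?_⟩
  calc dist (g a) (g (a + (s : C1))) = ‖((u - t : ℝ) : C1)‖ := by
        simp only [← hgt, ← hgu, dist_add_coe_add_coe]
    _ ≤ |u - t| := norm_coe_le_abs _
    _ < s := abs_sub_lt_iff.2 ⟨by linarith [ht.1], by linarith [ht.2, hu.1]⟩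

lemma exists_leaf_dist_lt (hmin : ∀ x : C1, Dense {y : C1 | ∃ g ∈ G, y = g x})
    (hΛ : IsLamination Λ) (hinv : Invariant G Λ) {p : C1 × C1} (hp : p ∈ Λ) :
    ∃ q ∈ Λ, dist q.1 q.2 < dist p.1 p.2 := by
  obtain ⟨s, hs0, hdist, hends⟩ := exists_eq_add_coe_of_ne (hΛ.ne p hp)
  have hs1 : s < 1 := by
    have := AddCircle.norm_le_half_period (1 : ℝ) one_ne_zero (x := p.1 - p.2)
    rw [← dist_eq_norm, hdist, abs_one] at this
    linarith
  rw [hdist]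
  rcases hends with hp₂ | hp₁
  · exact exists_leaf_dist_lt_of_add_coe hmin hΛ hinv (a := p.1) ⟨hs0, hs1⟩ (hp₂ ▸ hp)
  · exact exists_leaf_dist_lt_of_add_coe hmin hΛ hinv (a := p.2) ⟨hs0, hs1⟩
      (hp₁ ▸ hΛ.symm p hp)

lemma exists_diag_mem_closure (hmin : ∀ x : C1, Dense {y : C1 | ∃ g ∈ G, y = g x})
    (hΛ : IsLamination Λ) (hinv : Invariant G Λ) (hne : Λ.Nonempty) :
    ∃ x, (x, x) ∈ closure Λ := by
  obtain ⟨q, hq, hqmin⟩ := isClosed_closure.isCompact.exists_isMinOn hne.closure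
    (continuous_fst.dist continuous_snd).continuousOn
  have hdiag : q.1 = q.2 := by
    by_contra hne'
    obtain ⟨p, hp, hlt⟩ := exists_leaf_dist_lt hmin hΛ hinv (hΛ.isClosed q hq hne')
    exact (hqmin (subset_closure hp)).not_gt hlt
  exact ⟨q.1, by rwa [show (q.1, q.1) = q from Prod.ext rfl hdiag]⟩

lemma diag_subset_closure (hmin : ∀ x : C1, Dense {y : C1 | ∃ g ∈ G, y = g x})
    (hΛ : IsLamination Λ) (hinv : Invariant G Λ) (hne : Λ.Nonempty) :
    {p : C1 × C1 | p.1 = p.2} ⊆ closure Λ := by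
  obtain ⟨x, hx⟩ := exists_diag_mem_closure hmin hΛ hinv hne
  have hclosed : IsClosed {y : C1 | (y, y) ∈ closure Λ} :=
    isClosed_closure.preimage (continuous_id.prodMk continuous_id)
  have horbit : {y | ∃ g ∈ G, y = g x} ⊆ {y : C1 | (y, y) ∈ closure Λ} := by
    rintro _ ⟨g, hg, rfl⟩
    exact hinv.closure g hg _ hx
  have huniv := hclosed.closure_eq.symm.trans ((hmin x).mono horbit).closure_eq
  rintro ⟨y, z⟩ (rfl : y = z)
  exact eq_univ_iff_forall.1 huniv y

end CircleLamination

open CircleLamination in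
theorem stmt_19_general (G : Set (C1 ≃ₜ C1))
    (hmin : ∀ x : C1, Dense {y : C1 | ∃ g ∈ G, y = g x})
    (Λ : Set (C1 × C1)) (hΛ : IsLamination Λ) (hinv : Invariant G Λ)
    (hne : Λ.Nonempty) :
    (∀ ε : ℝ, 0 < ε → ∃ p ∈ Λ, dist p.1 p.2 < ε) ∧
    {p : C1 × C1 | p.1 = p.2} ⊆ closure Λ := by
  have hdiag := diag_subset_closure hmin hΛ hinv hne
  refine ⟨fun ε hε => ?_, hdiag⟩
  have hx : ((0 : C1), (0 : C1)) ∈ closure Λ := hdiag rfl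
  obtain ⟨p, hp, hpΛ⟩ := mem_closure_iff.1 hx {p : C1 × C1 | dist p.1 p.2 < ε}
    (isOpen_lt (continuous_fst.dist continuous_snd) continuous_const) (by simpa using hε)
  exact ⟨p, hpΛ, hp⟩

theorem stmt_19 (G : Set (C1 ≃ₜ C1)) (hG : IsHomeoGroup G)
    (hGo : ∀ g ∈ G, OrientationPreserving g)
    (hmin : ∀ x : C1, Dense {y : C1 | ∃ g ∈ G, y = g x})
    (Λ : Set (C1 × C1)) (hΛ : IsLamination Λ) (hinv : Invariant G Λ)
    (hne : Λ.Nonempty) :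
    (∀ ε : ℝ, 0 < ε → ∃ p ∈ Λ, dist p.1 p.2 < ε) ∧
    {p : C1 × C1 | p.1 = p.2} ⊆ closure Λ :=
  stmt_19_general G hmin Λ hΛ hinv hne
end
end
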